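/- arXiv:2006.07951 — 8 statements merged into one kernel-verified Lean document; each statement's English description precedes it below -/
import Mathlib

section
/- Let F be a field, p a prime with char F ≠ p, and M, N nonzero elements of F. Fix roots μ, ν in an algebraic closure of F with μ^p = M and ν^p = N. If μ ∈ F(ν), then M = a^p·N^k for some a ∈ F and some integer k. -/
/-!
If `N` is a `p`-th power in `F`, then `F⟮ν⟯` has degree `< p`, so taking norms from `F⟮ν⟯` turns
`μ ^ p = M` into `M ^ d = (norm μ) ^ p` with `d` prime to `p`, and `M` is a `p`-th power.
Otherwise adjoin a primitive `p`-th root of unity `ζ`: the field `E = F⟮ζ⟯` again has degree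
prime to `p`, so `X ^ p - N` stays irreducible over `E`. The substitution `ν ↦ ζ ν` then acts on
`E⟮ν⟯` with the distinct eigenvalues `ζ ^ i` on the basis `ν ^ i`, and `μ` is an eigenvector
since `μ ^ p ∈ F`; hence `μ = c ν ^ j` with `c ∈ E`, and the norm argument applied to
`c ^ p = M / N ^ j` finishes the proof.
-/

open Polynomial IntermediateField Module

theorem finrank_adjoin_simple_lt_of_pow_eq {F L : Type*} [Field F] [Field L] [Algebra F L]
    {n : ℕ} (hn : 1 < n) {b : F} {x : L} (hx : x ^ n = algebraMap F L (b ^ n)) :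
    finrank F F⟮x⟯ < n := by
  have hint : IsIntegral F x := .of_pow (by omega) (hx ▸ isIntegral_algebraMap)
  have hdvd : minpoly F x ∣ X ^ n - C (b ^ n) := minpoly.dvd F x (by simp [hx])
  have hmonic : (X ^ n - C (b ^ n)).Monic := monic_X_pow_sub_C _ (by omega)
  have hle := natDegree_le_of_dvd hdvd hmonic.ne_zero
  rw [natDegree_X_pow_sub_C] at hle
  rw [adjoin.finrank hint]
  refine hle.lt_of_ne fun hdeg ↦ ?_
  -- otherwise `minpoly F x = X ^ n - C (b ^ n)`, an irreducible polynomial with the root `b`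
  have hmin := eq_of_monic_of_dvd_of_natDegree_le (minpoly.monic hint) hmonic hdvd
    (by rw [natDegree_X_pow_sub_C, hdeg])
  have := degree_eq_one_of_irreducible_of_root (hmin ▸ minpoly.irreducible hint)
    (x := b) (by simp)
  rw [degree_X_pow_sub_C (by omega)] at this
  norm_cast at this
  omega

theorem coprime_finrank_adjoin_simple_of_pow_eq {F L : Type*} [Field F] [Field L] [Algebra F L]
    {p : ℕ} (hp : p.Prime) {b : F} {x : L} (hx : x ^ p = algebraMap F L (b ^ p)) :
    p.Coprime (finrank F F⟮x⟯) := by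
  have : FiniteDimensional F F⟮x⟯ :=
    adjoin.finiteDimensional (.of_pow hp.pos (hx ▸ isIntegral_algebraMap))
  exact (hp.coprime_iff_not_dvd).2 <|
    Nat.not_dvd_of_pos_of_lt finrank_pos (finrank_adjoin_simple_lt_of_pow_eq hp.one_lt hx)

theorem exists_pow_eq_of_pow_eq_algebraMap {F K : Type*} [Field F] [Field K] [Algebra F K]
    [FiniteDimensional F K] {n : ℕ} (hn : n.Coprime (finrank F K)) {Q : F} {x : K}
    (hx : x ^ n = algebraMap F K Q) : ∃ a : F, a ^ n = Q := by
  have hnorm : Algebra.norm F x ^ n = Q ^ finrank F K := by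
    rw [← map_pow, hx, Algebra.norm_algebraMap]
  obtain ⟨a, -, hQ⟩ := (pow_eq_pow_iff_of_coprime hn).mp hnorm
  exact ⟨a, hQ.symm⟩

theorem Polynomial.eq_C_mul_X_pow_of_comp_C_mul_X_eq {R : Type*} [CommRing R] [IsDomain R]
    {n j : ℕ} {ζ : R} (hζ : IsPrimitiveRoot ζ n) {g : R[X]} (hg : g.natDegree < n) (hj : j < n)
    (h : g.comp (C ζ * X) = C (ζ ^ j) * g) : g = C (g.coeff j) * X ^ j := by
  ext i
  rw [coeff_C_mul_X_pow]
  split_ifs with hij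
  · rw [hij]
  obtain hi | hi := lt_or_ge i n
  · have hcoeff : g.coeff i * (ζ ^ i - ζ ^ j) = 0 := by
      have := congrArg (coeff · i) h
      simp only [comp_C_mul_X_coeff, coeff_C_mul] at this
      linear_combination this
    refine (mul_eq_zero.mp hcoeff).resolve_right (sub_ne_zero.mpr fun h ↦ hij ?_)
    exact hζ.pow_inj hi hj h
  · exact coeff_eq_zero_of_natDegree_lt (by omega)

theorem exists_natDegree_lt_aeval_eq_of_mem_adjoin_simple {E L : Type*} [Field E] [Field L]
    [Algebra E L] {ν μ : L} (hν : IsIntegral E ν) (hmem : μ ∈ E⟮ν⟯) :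
    ∃ g : E[X], g.natDegree < (minpoly E ν).natDegree ∧ aeval ν g = μ := by
  obtain ⟨g, hg, hgμ⟩ := (adjoin.powerBasis hν).exists_eq_aeval ⟨μ, hmem⟩
  refine ⟨g, by simpa using hg, ?_⟩
  simpa [adjoin.powerBasis_gen] using congrArg Subtype.val hgμ.symm

theorem exists_eq_algebraMap_mul_pow_of_mem_adjoin {E L : Type*} [Field E] [Field L]
    [Algebra E L] {n : ℕ} {ζ : E} (hζ : IsPrimitiveRoot ζ n) {N : E}
    (hirr : Irreducible (X ^ n - C N)) {ν μ : L} (hν : ν ^ n = algebraMap E L N)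
    (hμ : μ ^ n ∈ Set.range (algebraMap E L)) (hmem : μ ∈ E⟮ν⟯) :
    ∃ (c : E) (j : ℕ), μ = algebraMap E L c * ν ^ j := by
  have hn : n ≠ 0 := by
    have := hirr.natDegree_pos
    rintro rfl
    simp at this
  have : NeZero n := ⟨hn⟩
  have hνroot : aeval ν (X ^ n - C N) = 0 := by simp [hν]
  have hint : IsIntegral E ν := ⟨_, monic_X_pow_sub_C N hn, hνroot⟩
  have hmin : minpoly E ν = X ^ n - C N :=
    (minpoly.eq_of_irreducible_of_monic hirr hνroot (monic_X_pow_sub_C N hn)).symm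
  obtain ⟨g, hg, hgμ⟩ := exists_natDegree_lt_aeval_eq_of_mem_adjoin_simple hint hmem
  rw [hmin, natDegree_X_pow_sub_C] at hg
  obtain rfl | hμ0 := eq_or_ne μ 0
  · exact ⟨0, 0, by simp⟩
  obtain ⟨m, hm⟩ := hμ
  set ζL := algebraMap E L ζ
  -- `ζ ν` is a conjugate of `ν`, so `g (ζ ν)` is again an `n`-th root of `μ ^ n`
  have hconj : aeval (ζL * ν) g ^ n = μ ^ n := by
    have hroot : aeval (ζL * ν) (minpoly E ν) = 0 := by
      rw [hmin, map_sub, aeval_X_pow, aeval_C, mul_pow, hν, ← map_pow, hζ.pow_eq_one, map_one,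
        one_mul, sub_self]
    have := aeval_eq_zero_of_dvd_aeval_eq_zero (minpoly.dvd E ν (p := g ^ n - C m)
      (by simp [hgμ, hm])) hroot
    simpa [hm, sub_eq_zero] using this
  obtain ⟨j, hj, hζj⟩ := (hζ.map_of_injective (algebraMap E L).injective).eq_pow_of_pow_eq_one
    (show (aeval (ζL * ν) g / μ) ^ n = 1 by rw [div_pow, hconj, div_self (pow_ne_zero n hμ0)])
  have hcomp : g.comp (C ζ * X) = C (ζ ^ j) * g := by
    refine sub_eq_zero.mp (eq_zero_of_dvd_of_natDegree_lt (minpoly.dvd E ν ?_) ?_)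
    · rw [map_sub, aeval_comp, map_mul, aeval_C, aeval_X, map_mul, aeval_C, hgμ, map_pow, hζj,
        div_mul_cancel₀ _ hμ0, sub_self]
    · rw [hmin, natDegree_X_pow_sub_C]
      refine (natDegree_sub_le _ _).trans_lt (max_lt ?_ ((natDegree_C_mul_le _ _).trans_lt hg))
      refine natDegree_comp_le.trans_lt ?_
      rw [natDegree_C_mul_X _ (hζ.ne_zero hn), mul_one]
      exact hg
  refine ⟨g.coeff j, j, ?_⟩
  rw [← hgμ]
  conv_lhs => rw [Polynomial.eq_C_mul_X_pow_of_comp_C_mul_X_eq hζ hg hj hcomp]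
  simp

theorem exists_pow_eq_of_mem_adjoin_of_pow_eq {F L : Type*} [Field F] [Field L] [Algebra F L]
    {p : ℕ} (hp : p.Prime) {M b : F} {μ ν : L} (hμ : μ ^ p = algebraMap F L M)
    (hν : ν ^ p = algebraMap F L (b ^ p)) (hmem : μ ∈ F⟮ν⟯) : ∃ a : F, a ^ p = M := by
  have : FiniteDimensional F F⟮ν⟯ :=
    adjoin.finiteDimensional (.of_pow hp.pos (hν ▸ isIntegral_algebraMap))
  have hx : (⟨μ, hmem⟩ : F⟮ν⟯) ^ p = algebraMap F F⟮ν⟯ M := Subtype.ext hμ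
  have hcop := coprime_finrank_adjoin_simple_of_pow_eq hp hν
  exact exists_pow_eq_of_pow_eq_algebraMap hcop hx

theorem exists_eq_pow_mul_pow_of_mem_adjoin {F L : Type*} [Field F] [Field L] [Algebra F L]
    {p : ℕ} (hp : p.Prime) {ζ : L} (hζ : IsPrimitiveRoot ζ p) {M N : F} (hN : N ≠ 0)
    (hNp : ∀ b : F, b ^ p ≠ N) {μ ν : L} (hμ : μ ^ p = algebraMap F L M)
    (hν : ν ^ p = algebraMap F L N) (hmem : μ ∈ F⟮ν⟯) : ∃ (a : F) (j : ℕ), M = a ^ p * N ^ j := by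
  have hζp : ζ ^ p = algebraMap F L (1 ^ p) := by simp [hζ.pow_eq_one]
  have : FiniteDimensional F F⟮ζ⟯ :=
    adjoin.finiteDimensional (.of_pow hp.pos (hζp ▸ isIntegral_algebraMap))
  have hcop := coprime_finrank_adjoin_simple_of_pow_eq hp hζp
  -- a `p`-th root of `N` in `F⟮ζ⟯` would, by the norm argument, give one in `F`
  have hirr : Irreducible (X ^ p - C (algebraMap F F⟮ζ⟯ N)) :=
    X_pow_sub_C_irreducible_of_prime hp fun c hc ↦
      (exists_pow_eq_of_pow_eq_algebraMap hcop hc).elim hNp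
  obtain ⟨c, j, hc⟩ := exists_eq_algebraMap_mul_pow_of_mem_adjoin
    (IsPrimitiveRoot.of_map_of_injective (ζ := AdjoinSimple.gen F ζ) hζ
      (algebraMap F⟮ζ⟯ L).injective)
    hirr (ν := ν) (by rw [hν, IsScalarTower.algebraMap_apply F F⟮ζ⟯])
    ⟨algebraMap F F⟮ζ⟯ M, by rw [hμ, ← IsScalarTower.algebraMap_apply]⟩
    (adjoin_simple_le_iff (K := (F⟮ζ⟯⟮ν⟯).restrictScalars F) |>.mpr
      (mem_adjoin_simple_self F⟮ζ⟯ ν) hmem)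
  have hcp : c ^ p = algebraMap F F⟮ζ⟯ (M / N ^ j) := by
    apply (algebraMap F⟮ζ⟯ L).injective
    have hNj : algebraMap F L (N ^ j) ≠ 0 := by simpa using pow_ne_zero j hN
    rw [map_pow, ← IsScalarTower.algebraMap_apply, map_div₀, eq_div_iff hNj, map_pow, ← hν,
      ← hμ, hc, mul_pow, ← pow_mul, ← pow_mul, mul_comm j]
  obtain ⟨a, ha⟩ := exists_pow_eq_of_pow_eq_algebraMap hcop hcp
  exact ⟨a, j, by rw [ha, div_mul_cancel₀ _ (pow_ne_zero j hN)]⟩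

theorem lemma1_claim_general
    {F : Type*} [Field F] (p : ℕ) (hp : p.Prime) (hchar : ringChar F ≠ p)
    (M N : F) (hN : N ≠ 0)
    (μ ν : AlgebraicClosure F)
    (hμ : μ ^ p = algebraMap F (AlgebraicClosure F) M)
    (hν : ν ^ p = algebraMap F (AlgebraicClosure F) N)
    (hmem : μ ∈ IntermediateField.adjoin F ({ν} : Set (AlgebraicClosure F))) :
    ∃ (a : F) (k : ℤ), M = a ^ p * N ^ k := by
  by_cases hNp : ∃ b : F, b ^ p = N
  · obtain ⟨b, rfl⟩ := hNp
    obtain ⟨a, ha⟩ := exists_pow_eq_of_mem_adjoin_of_pow_eq hp hμ hν hmem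
    exact ⟨a, 0, by simp [ha]⟩
  push Not at hNp
  have : NeZero (p : F) := ⟨CharP.cast_ne_zero_of_ne_of_prime F hp hchar⟩
  obtain ⟨ζ, hζ⟩ := HasEnoughRootsOfUnity.exists_primitiveRoot (AlgebraicClosure F) p
  obtain ⟨a, j, ha⟩ := exists_eq_pow_mul_pow_of_mem_adjoin hp hζ hN hNp hμ hν hmem
  exact ⟨a, j, by rw [ha, zpow_natCast]⟩

theorem lemma1_claim
    {F : Type*} [Field F] (p : ℕ) (hp : p.Prime) (hchar : ringChar F ≠ p)
    (M N : F) (hM : M ≠ 0) (hN : N ≠ 0)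
    (μ ν : AlgebraicClosure F)
    (hμ : μ ^ p = algebraMap F (AlgebraicClosure F) M)
    (hν : ν ^ p = algebraMap F (AlgebraicClosure F) N)
    (hmem : μ ∈ IntermediateField.adjoin F ({ν} : Set (AlgebraicClosure F))) :
    ∃ (a : F) (k : ℤ), M = a ^ p * N ^ k :=
  lemma1_claim_general p hp hchar M N hN μ ν hμ hν hmem
end

section
/- Let F be a field, p a prime with char F ≠ p, ζ a primitive p-th root of unity in an algebraic closure of F, and K = F(ζ). Then an element of F that is a p-th power of an element of K is already a p-th power of an element of F; that is, K^p ∩ F = F^p. -/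
/-!
If `x ∈ F` is not a `p`-th power, then `X ^ p - x` is irreducible over `F`, so any `p`-th root
of `x` generates an extension of degree `p`. But `[F(ζ) : F] ≤ p - 1`, because `ζ ≠ 1` is a root
of `1 + X + ⋯ + X ^ (p - 1)`; hence `F(ζ)` contains no `p`-th root of `x`.
-/

open Polynomial IntermediateField

theorem IsPrimitiveRoot.natDegree_minpoly_lt {F A : Type*} [Field F] [CommRing A] [IsDomain A]
    [Algebra F A] {ζ : A} {n : ℕ} (hζ : IsPrimitiveRoot ζ n) (hn : 1 < n) :
    (minpoly F ζ).natDegree < n := by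
  have hgeom : aeval ζ (∑ i ∈ Finset.range n, (X : F[X]) ^ i) = 0 := by
    simpa using hζ.geom_sum_eq_zero hn
  calc (minpoly F ζ).natDegree
      ≤ (∑ i ∈ Finset.range n, (X : F[X]) ^ i).natDegree :=
        natDegree_le_of_dvd (minpoly.dvd F ζ hgeom) (monic_geom_sum_X (by omega)).ne_zero
    _ ≤ n - 1 := natDegree_sum_le_of_forall_le _ _ fun i hi => by
        rw [natDegree_X_pow]
        have := Finset.mem_range.mp hi
        omega
    _ < n := by omega

theorem exists_pow_eq_of_pow_eq_algebraMap_of_finrank_lt {F E : Type*} [Field F] [Field E]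
    [Algebra F E] [FiniteDimensional F E] {p : ℕ} (hp : p.Prime) (hE : Module.finrank F E < p)
    {x : F} {y : E} (hy : y ^ p = algebraMap F E x) : ∃ a : F, x = a ^ p := by
  by_contra! hx
  have hmin : minpoly F y = X ^ p - C x :=
    (minpoly.eq_of_irreducible_of_monic
      (X_pow_sub_C_irreducible_of_prime hp fun a ha => hx a ha.symm)
      (by simp [hy]) (monic_X_pow_sub_C x hp.ne_zero)).symm
  have hdeg := minpoly.natDegree_le (A := F) y
  rw [hmin, natDegree_X_pow_sub_C] at hdeg
  omega

theorem Kp_inter_F_eq_Fp_general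
    {F : Type*} [Field F] (p : ℕ) (hp : p.Prime)
    (ζ : AlgebraicClosure F) (hζ : IsPrimitiveRoot ζ p)
    (x : F) :
    (∃ y ∈ IntermediateField.adjoin F ({ζ} : Set (AlgebraicClosure F)),
        y ^ p = algebraMap F (AlgebraicClosure F) x) ↔
      ∃ a : F, x = a ^ p := by
  refine ⟨fun ⟨y, hyK, hy⟩ => ?_, fun ⟨a, ha⟩ => ?_⟩
  · have hζint : IsIntegral F ζ := (hζ.isIntegral hp.pos).tower_top
    have := adjoin.finiteDimensional hζint
    have hrank : Module.finrank F F⟮ζ⟯ < p := by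
      rw [adjoin.finrank hζint]
      exact hζ.natDegree_minpoly_lt hp.one_lt
    exact exists_pow_eq_of_pow_eq_algebraMap_of_finrank_lt hp hrank
      (y := ⟨y, hyK⟩) (Subtype.ext hy)
  · exact ⟨algebraMap F _ a, IntermediateField.algebraMap_mem _ a, by rw [ha, map_pow]⟩

theorem Kp_inter_F_eq_Fp
    {F : Type*} [Field F] (p : ℕ) (hp : p.Prime) (hchar : ringChar F ≠ p)
    (ζ : AlgebraicClosure F) (hζ : IsPrimitiveRoot ζ p)
    (x : F) :
    (∃ y ∈ IntermediateField.adjoin F ({ζ} : Set (AlgebraicClosure F)),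
        y ^ p = algebraMap F (AlgebraicClosure F) x) ↔
      ∃ a : F, x = a ^ p :=
  Kp_inter_F_eq_Fp_general p hp ζ hζ x
end

section
/- Let F be a field in which −1 is not a square, and let a be a nonzero element of F such that neither a nor −a is a square in F. Then for every n ≥ 1 and every root α of X^{2^n} − a in an algebraic closure of F, the polynomial X² + 1 has no root in F(α); that is, √−1 ∉ F(α). -/
/-!
Climb the tower `F ⊆ F(α^(2^(n-1))) ⊆ ⋯ ⊆ F(α²) ⊆ F(α)` of quadratic extensions, each
obtained by adjoining a square root `β` of an element `β²` of the previous field `K`.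
Writing elements of `K(β)` as `u + vβ` and comparing coefficients, one finds: if `-1` and
`-β²` have no square root in `K` and `β ∉ K`, then `-1` has no square root in `K(β)`, and
neither has `dβ` for any nonzero `d ∈ K`. Taking `d = ±1`, the hypotheses propagate up the
tower, starting from the hypotheses on `-1`, `a` and `-a` in `F`.
-/

namespace Subfield

variable {Ω : Type*} [Field Ω] (K : Subfield Ω)

def ContainsSqrt (c : Ω) : Prop := ∃ y ∈ K, y ^ 2 = c

theorem containsSqrt_fieldRange_iff {F : Type*} [Field F] (f : F →+* Ω) (x : F) :
    f.fieldRange.ContainsSqrt (f x) ↔ ∃ y : F, y ^ 2 = x := by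
  constructor
  · rintro ⟨_, ⟨y, rfl⟩, hy⟩
    exact ⟨y, f.injective (by rw [map_pow, hy])⟩
  · rintro ⟨y, rfl⟩
    exact ⟨f y, ⟨y, rfl⟩, (map_pow f y 2).symm⟩

def adjoinSqrt (β : Ω) (hβ : β ^ 2 ∈ K) : Subfield Ω where
  carrier := {x | ∃ u ∈ K, ∃ v ∈ K, x = u + v * β}
  zero_mem' := ⟨0, K.zero_mem, 0, K.zero_mem, by ring⟩
  one_mem' := ⟨1, K.one_mem, 0, K.zero_mem, by ring⟩
  add_mem' := by
    rintro _ _ ⟨u, hu, v, hv, rfl⟩ ⟨u', hu', v', hv', rfl⟩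
    exact ⟨u + u', K.add_mem hu hu', v + v', K.add_mem hv hv', by ring⟩
  mul_mem' := by
    rintro _ _ ⟨u, hu, v, hv, rfl⟩ ⟨u', hu', v', hv', rfl⟩
    exact ⟨u * u' + v * v' * β ^ 2,
      K.add_mem (K.mul_mem hu hu') (K.mul_mem (K.mul_mem hv hv') hβ), u * v' + v * u',
      K.add_mem (K.mul_mem hu hv') (K.mul_mem hv hu'), by ring⟩
  neg_mem' := by
    rintro _ ⟨u, hu, v, hv, rfl⟩
    exact ⟨-u, K.neg_mem hu, -v, K.neg_mem hv, by ring⟩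
  inv_mem' := by
    rintro _ ⟨u, hu, v, hv, rfl⟩
    set N := u ^ 2 - v ^ 2 * β ^ 2
    have hNK : N ∈ K := K.sub_mem (K.pow_mem hu 2) (K.mul_mem (K.pow_mem hv 2) hβ)
    by_cases hN0 : N = 0
    · -- `N = (u + vβ)(u - vβ)`, and `u + vβ = 2u ∈ K` when the second factor vanishes
      rcases mul_eq_zero.1 (show (u + v * β) * (u - v * β) = 0 by linear_combination hN0) with
        h | h
      · exact ⟨0, K.zero_mem, 0, K.zero_mem, by rw [h]; simp⟩
      · have h2u : u + v * β = 2 * u := by linear_combination -h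
        exact ⟨(2 * u)⁻¹, K.inv_mem (K.mul_mem (ofNat_mem K 2) hu), 0, K.zero_mem,
          by rw [h2u]; ring⟩
    · refine ⟨u / N, K.div_mem hu hNK, -v / N, K.div_mem (K.neg_mem hv) hNK,
        inv_eq_of_mul_eq_one_right ?_⟩
      field_simp
      ring

variable {K}

theorem le_adjoinSqrt (β : Ω) (hβ : β ^ 2 ∈ K) : K ≤ K.adjoinSqrt β hβ :=
  fun x hx ↦ ⟨x, hx, 0, K.zero_mem, by ring⟩

theorem mem_adjoinSqrt_self (β : Ω) (hβ : β ^ 2 ∈ K) : β ∈ K.adjoinSqrt β hβ :=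
  ⟨0, K.zero_mem, 1, K.one_mem, by ring⟩

theorem eq_zero_of_mul_mem {w β : Ω} (hβK : β ∉ K) (hw : w ∈ K) (hwβ : w * β ∈ K) :
    w = 0 := by
  by_contra hw0
  exact hβK (by simpa [hw0] using K.mul_mem (K.inv_mem hw) hwβ)

variable {β : Ω} (hβ : β ^ 2 ∈ K)

theorem exists_coeffs_of_sq_eq (hβK : β ∉ K) {c d y : Ω} (hc : c ∈ K) (hd : d ∈ K)
    (hy : y ∈ K.adjoinSqrt β hβ) (hy2 : y ^ 2 = c + d * β) :
    ∃ u ∈ K, ∃ v ∈ K, u ^ 2 + v ^ 2 * β ^ 2 = c ∧ 2 * u * v = d := by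
  obtain ⟨u, hu, v, hv, rfl⟩ := hy
  have hsq_mem : u ^ 2 + v ^ 2 * β ^ 2 ∈ K :=
    K.add_mem (K.pow_mem hu 2) (K.mul_mem (K.pow_mem hv 2) hβ)
  have hcoeff : 2 * u * v - d = 0 := by
    refine eq_zero_of_mul_mem hβK (K.sub_mem (K.mul_mem (K.mul_mem (ofNat_mem K 2) hu) hv) hd) ?_
    rw [show (2 * u * v - d) * β = c - (u ^ 2 + v ^ 2 * β ^ 2) by linear_combination hy2]
    exact K.sub_mem hc hsq_mem
  exact ⟨u, hu, v, hv, by linear_combination hy2 - β * hcoeff, by linear_combination hcoeff⟩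

theorem not_containsSqrt_neg_one_adjoinSqrt (hβK : β ∉ K) (hneg : ¬K.ContainsSqrt (-β ^ 2))
    (h1 : ¬K.ContainsSqrt (-1)) : ¬(K.adjoinSqrt β hβ).ContainsSqrt (-1) := by
  rintro ⟨y, hy, hy2⟩
  obtain ⟨u, hu, v, hv, hnorm, huv⟩ :=
    exists_coeffs_of_sq_eq hβ hβK (K.neg_mem K.one_mem) K.zero_mem hy (by rw [hy2]; ring)
  have h2 : (2 : Ω) ≠ 0 := fun h ↦ h1 ⟨1, K.one_mem, by linear_combination h⟩
  rcases mul_eq_zero.1 huv with huv | rfl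
  · obtain rfl := (mul_eq_zero.1 huv).resolve_left h2
    exact hneg ⟨v * β ^ 2, K.mul_mem hv hβ, by linear_combination β ^ 2 * hnorm⟩
  · exact h1 ⟨u, hu, by linear_combination hnorm⟩

theorem not_containsSqrt_mul_adjoinSqrt (hβK : β ∉ K) (hneg : ¬K.ContainsSqrt (-β ^ 2))
    {d : Ω} (hd : d ∈ K) (hd0 : d ≠ 0) : ¬(K.adjoinSqrt β hβ).ContainsSqrt (d * β) := by
  rintro ⟨y, hy, hy2⟩
  obtain ⟨u, hu, v, hv, hnorm, huv⟩ :=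
    exists_coeffs_of_sq_eq hβ hβK K.zero_mem hd hy (by rw [hy2]; ring)
  refine hneg ⟨2 * u ^ 2 / d, K.div_mem (K.mul_mem (ofNat_mem K 2) (K.pow_mem hu 2)) hd, ?_⟩
  field_simp
  linear_combination 4 * u ^ 2 * hnorm - β ^ 2 * (2 * u * v + d) * huv

variable (K) in
theorem exists_ge_not_containsSqrt (h1 : ¬K.ContainsSqrt (-1)) (n : ℕ) (α : Ω)
    (hα : α ^ 2 ^ n ∈ K) (hpos : ¬K.ContainsSqrt (α ^ 2 ^ n))
    (hneg : ¬K.ContainsSqrt (-α ^ 2 ^ n)) :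
    ∃ L : Subfield Ω, K ≤ L ∧ α ∈ L ∧ ¬L.ContainsSqrt (-1) ∧ ¬L.ContainsSqrt α ∧
      ¬L.ContainsSqrt (-α) := by
  induction n generalizing α with
  | zero =>
    rw [pow_zero, pow_one] at hα hpos hneg
    exact ⟨K, le_rfl, hα, h1, hpos, hneg⟩
  | succ n ih =>
    rw [pow_succ', pow_mul] at hα hpos hneg
    obtain ⟨L, hKL, hαL, hL1, hLpos, hLneg⟩ := ih (α ^ 2) hα hpos hneg
    have hαL' : α ∉ L := fun h ↦ hLpos ⟨α, h, rfl⟩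
    refine ⟨L.adjoinSqrt α hαL, hKL.trans (le_adjoinSqrt α hαL), mem_adjoinSqrt_self α hαL,
      not_containsSqrt_neg_one_adjoinSqrt hαL hαL' hLneg hL1, ?_, ?_⟩
    · simpa using not_containsSqrt_mul_adjoinSqrt hαL hαL' hLneg L.one_mem one_ne_zero
    · simpa using not_containsSqrt_mul_adjoinSqrt hαL hαL' hLneg (L.neg_mem L.one_mem)
        (neg_ne_zero.2 one_ne_zero)

end Subfield

open Subfield in
theorem lemma2_sqrt_neg_one_general
    {F : Type*} [Field F] (hsq : ¬ ∃ x : F, x ^ 2 = -1)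
    (a : F)
    (ha1 : ¬ ∃ x : F, x ^ 2 = a) (ha2 : ¬ ∃ x : F, x ^ 2 = -a)
    (n : ℕ)
    (α : AlgebraicClosure F)
    (hα : α ^ 2 ^ n = algebraMap F (AlgebraicClosure F) a) :
    ¬ ∃ y ∈ IntermediateField.adjoin F ({α} : Set (AlgebraicClosure F)), y ^ 2 = -1 := by
  set f := algebraMap F (AlgebraicClosure F)
  have h1 : ¬f.fieldRange.ContainsSqrt (-1) := by
    rwa [← map_one f, ← map_neg, containsSqrt_fieldRange_iff]
  have hpos : ¬f.fieldRange.ContainsSqrt (α ^ 2 ^ n) := by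
    rwa [hα, containsSqrt_fieldRange_iff]
  have hneg : ¬f.fieldRange.ContainsSqrt (-α ^ 2 ^ n) := by
    rwa [hα, ← map_neg, containsSqrt_fieldRange_iff]
  obtain ⟨L, hFL, hαL, hL1, -, -⟩ :=
    exists_ge_not_containsSqrt _ h1 n α (hα ▸ ⟨a, rfl⟩) hpos hneg
  have hle : IntermediateField.adjoin F {α} ≤ L.toIntermediateField fun x ↦ hFL ⟨x, rfl⟩ :=
    IntermediateField.adjoin_simple_le_iff.2 hαL
  exact fun ⟨y, hy, hy2⟩ ↦ hL1 ⟨y, hle hy, hy2⟩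

theorem lemma2_sqrt_neg_one
    {F : Type*} [Field F] (hsq : ¬ ∃ x : F, x ^ 2 = -1)
    (a : F) (ha : a ≠ 0)
    (ha1 : ¬ ∃ x : F, x ^ 2 = a) (ha2 : ¬ ∃ x : F, x ^ 2 = -a)
    (n : ℕ) (hn : 1 ≤ n)
    (α : AlgebraicClosure F)
    (hα : α ^ 2 ^ n = algebraMap F (AlgebraicClosure F) a) :
    ¬ ∃ y ∈ IntermediateField.adjoin F ({α} : Set (AlgebraicClosure F)), y ^ 2 = -1 :=
  lemma2_sqrt_neg_one_general hsq a ha1 ha2 n α hα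
end

section
/- Let F be a field in which −1 is not a square, and let a be a nonzero element of F such that neither a nor −a is a square in F. Then for every n ≥ 1 and every root α of X^{2^n} − a in an algebraic closure of F, neither α nor −α is the square of an element of F(α). -/
/-!
Put `β = α ^ 2` and `K = F⟮β⟯`; by induction on `n`, neither `β` nor `-β` is a square in `K`.
Then `α ∉ K`, so every element of `F⟮α⟯` is uniquely `c + d α` with `c, d ∈ K`. If
`(c + d α) ^ 2 = ± α`, comparing coefficients gives `c ^ 2 + d ^ 2 β = 0` and `2 c d = ± 1`, and
then the norm `c ^ 2 - d ^ 2 β` of `c + d α` satisfies `(c ^ 2 - d ^ 2 β) ^ 2 = -β`.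
-/

open IntermediateField

section

variable {F L : Type*} [Field F] [Field L] [Algebra F L]

theorem exists_sq_eq_of_mem_adjoin_algebraMap {a b : F} {y : L}
    (hy : y ∈ F⟮algebraMap F L a⟯) (hy2 : y ^ 2 = algebraMap F L b) : ∃ x : F, x ^ 2 = b := by
  rw [adjoin_simple_eq_bot_iff.mpr (IntermediateField.algebraMap_mem ⊥ a)] at hy
  obtain ⟨x, rfl⟩ := mem_bot.mp hy
  exact ⟨x, (algebraMap F L).injective (by rw [map_pow, hy2])⟩

theorem exists_add_mul_of_mem_adjoin_simple {α y : L} (hα : IsAlgebraic F α) (hy : y ∈ F⟮α⟯) :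
    ∃ c ∈ F⟮α ^ 2⟯, ∃ d ∈ F⟮α ^ 2⟯, y = c + d * α := by
  set K := F⟮α ^ 2⟯
  have hβ : α ^ 2 ∈ K := mem_adjoin_simple_self F _
  replace hy : y ∈ Algebra.adjoin F {α} := by
    rwa [← adjoin_simple_toSubalgebra_of_isAlgebraic hα]
  induction hy using Algebra.adjoin_induction with
  | mem x hx =>
    rw [Set.mem_singleton_iff.mp hx]
    exact ⟨0, zero_mem K, 1, one_mem K, by ring⟩
  | algebraMap x => exact ⟨algebraMap F L x, IntermediateField.algebraMap_mem K x, 0, zero_mem K, by ring⟩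
  | add x y _ _ ihx ihy =>
    obtain ⟨c, hc, d, hd, rfl⟩ := ihx
    obtain ⟨c', hc', d', hd', rfl⟩ := ihy
    exact ⟨c + c', add_mem hc hc', d + d', add_mem hd hd', by ring⟩
  | mul x y _ _ ihx ihy =>
    obtain ⟨c, hc, d, hd, rfl⟩ := ihx
    obtain ⟨c', hc', d', hd', rfl⟩ := ihy
    exact ⟨c * c' + d * d' * α ^ 2, add_mem (mul_mem hc hc') (mul_mem (mul_mem hd hd') hβ),
      c * d' + d * c', add_mem (mul_mem hc hd') (mul_mem hd hc'), by ring⟩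

theorem IntermediateField.eq_zero_and_eq_zero_of_add_mul_eq_zero {K : IntermediateField F L}
    {α p q : L} (hα : α ∉ K) (hp : p ∈ K) (hq : q ∈ K) (h : p + q * α = 0) : p = 0 ∧ q = 0 := by
  obtain rfl : q = 0 := by
    by_contra hq0
    refine hα ?_
    rw [show α = -p / q by field_simp; linear_combination h]
    exact div_mem (neg_mem hp) hq
  simpa using h

theorem not_exists_sq_eq_smul_of_not_exists_sq {α : L} (hα : IsAlgebraic F α)
    (hsq : ¬ ∃ z ∈ F⟮α ^ 2⟯, z ^ 2 = α ^ 2) (hneg : ¬ ∃ z ∈ F⟮α ^ 2⟯, z ^ 2 = -α ^ 2)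
    {ε : F} (hε : ε ^ 2 = 1) : ¬ ∃ y ∈ F⟮α⟯, y ^ 2 = algebraMap F L ε * α := by
  rintro ⟨y, hy, hy2⟩
  obtain ⟨c, hc, d, hd, rfl⟩ := exists_add_mul_of_mem_adjoin_simple hα hy
  set K := F⟮α ^ 2⟯
  have hβ : α ^ 2 ∈ K := mem_adjoin_simple_self F _
  have hε' : algebraMap F L ε ^ 2 = 1 := by rw [← map_pow, hε, map_one]
  obtain ⟨hre, him⟩ := eq_zero_and_eq_zero_of_add_mul_eq_zero (fun h ↦ hsq ⟨α, h, rfl⟩)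
    (add_mem (pow_mem hc 2) (mul_mem (pow_mem hd 2) hβ))
    (sub_mem (mul_mem (mul_mem (ofNat_mem K 2) hc) hd) (IntermediateField.algebraMap_mem K ε))
    (by linear_combination hy2)
  refine hneg ⟨c ^ 2 - d ^ 2 * α ^ 2, sub_mem (pow_mem hc 2) (mul_mem (pow_mem hd 2) hβ), ?_⟩
  linear_combination (c ^ 2 + d ^ 2 * α ^ 2) * hre
    - α ^ 2 * (2 * c * d + algebraMap F L ε) * him - α ^ 2 * hε'
end

theorem lemma2_root_not_square_general
    {F : Type*} [Field F]
    (a : F)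
    (ha1 : ¬ ∃ x : F, x ^ 2 = a) (ha2 : ¬ ∃ x : F, x ^ 2 = -a)
    (n : ℕ)
    (α : AlgebraicClosure F)
    (hα : α ^ 2 ^ n = algebraMap F (AlgebraicClosure F) a) :
    (¬ ∃ y ∈ IntermediateField.adjoin F ({α} : Set (AlgebraicClosure F)), y ^ 2 = α) ∧
    (¬ ∃ y ∈ IntermediateField.adjoin F ({α} : Set (AlgebraicClosure F)), y ^ 2 = -α) := by
  induction n generalizing α with
  | zero =>
    rw [pow_zero, pow_one] at hα
    subst hα
    exact ⟨fun ⟨y, hy, hy2⟩ ↦ ha1 (exists_sq_eq_of_mem_adjoin_algebraMap hy hy2),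
      fun ⟨y, hy, hy2⟩ ↦ ha2 (exists_sq_eq_of_mem_adjoin_algebraMap hy (by rw [hy2, map_neg]))⟩
  | succ n ih =>
    obtain ⟨hsq, hneg⟩ := ih (α ^ 2) (by rw [← pow_mul, ← pow_succ']; exact hα)
    have hα' : IsAlgebraic F α := Algebra.IsAlgebraic.isAlgebraic α
    exact ⟨by simpa using not_exists_sq_eq_smul_of_not_exists_sq hα' hsq hneg (one_pow 2),
      by simpa using not_exists_sq_eq_smul_of_not_exists_sq hα' hsq hneg (ε := -1) (by norm_num)⟩

theorem lemma2_root_not_square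
    {F : Type*} [Field F] (hsq : ¬ ∃ x : F, x ^ 2 = -1)
    (a : F) (ha : a ≠ 0)
    (ha1 : ¬ ∃ x : F, x ^ 2 = a) (ha2 : ¬ ∃ x : F, x ^ 2 = -a)
    (n : ℕ) (hn : 1 ≤ n)
    (α : AlgebraicClosure F)
    (hα : α ^ 2 ^ n = algebraMap F (AlgebraicClosure F) a) :
    (¬ ∃ y ∈ IntermediateField.adjoin F ({α} : Set (AlgebraicClosure F)), y ^ 2 = α) ∧
    (¬ ∃ y ∈ IntermediateField.adjoin F ({α} : Set (AlgebraicClosure F)), y ^ 2 = -α) :=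
  lemma2_root_not_square_general a ha1 ha2 n α hα
end

section
/- Let F be a field with char F ≠ 2, let n ≥ 1, let ζ be a primitive 2^n-th root of unity in an algebraic closure of F, and let K = F(ζ). If n ≤ 2 or −1 is a square in F, then the Galois group Gal(K/F) is cyclic. -/
/-! The Galois group of `F(ζ)/F` embeds into `(ℤ/2ⁿ)ˣ` by `σ ↦ a` where `σ ζ = ζ ^ a`, and
`(ℤ/2ⁿ)ˣ` is cyclic for `n ≤ 2`. For `n ≥ 2`, `ζ ^ (2ⁿ / 4)` squares to `-1`, so it is `±x` for a
square root `x ∈ F` of `-1` and is fixed by every `σ`; hence `a ≡ 1 mod 4`. The units `≡ 1 mod 4`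
form a group of order `2ⁿ⁻²` in which `5` has order `2ⁿ⁻²`, so the image is a subgroup of a cyclic
group. -/

theorem ZMod.isCyclic_ker_unitsMap_four (m : ℕ) (h : 4 ∣ 2 ^ (m + 2)) :
    IsCyclic (ZMod.unitsMap h).ker := by
  have hcard : Nat.card (ZMod.unitsMap h).ker = 2 ^ m := by
    have := (ZMod.unitsMap h).ker.card_mul_index
    simp only [Subgroup.index_ker, MonoidHom.range_eq_top.mpr (ZMod.unitsMap_surjective h),
      Subgroup.card_top, Nat.card_eq_fintype_card, ZMod.card_units_eq_totient,
      Nat.totient_prime_pow_succ Nat.prime_two] at this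
    rw [show Nat.totient 4 = 2 by decide, pow_succ 2 m] at this
    simpa using this
  let five : (ZMod (2 ^ (m + 2)))ˣ := ZMod.unitOfCoprime 5 (Nat.Coprime.pow_right _ (by norm_num))
  have hfive : five ∈ (ZMod.unitsMap h).ker := by
    rw [MonoidHom.mem_ker, Units.ext_iff, ZMod.unitsMap_def, Units.coe_map]
    simp only [five, ZMod.coe_unitOfCoprime, Nat.cast_ofNat, MonoidHom.coe_coe, map_ofNat]
    decide
  refine isCyclic_of_orderOf_eq_card ⟨five, hfive⟩ ?_
  rw [Subgroup.orderOf_mk, ← orderOf_units, ZMod.coe_unitOfCoprime, Nat.cast_ofNat,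
    ZMod.orderOf_five, hcard]

theorem IsPrimitiveRoot.unitsMap_autToPow_eq_one {R S : Type*} [CommRing R] [CommRing S]
    [IsDomain S] [Algebra R S] {μ : S} {k d : ℕ} [NeZero k] (hμ : IsPrimitiveRoot μ k)
    (hd : d ∣ k) {σ : S ≃ₐ[R] S} (hσ : σ (μ ^ (k / d)) = μ ^ (k / d)) :
    ZMod.unitsMap hd (hμ.autToPow R σ) = 1 := by
  have hη : IsPrimitiveRoot (μ ^ (k / d)) d :=
    hμ.pow (NeZero.pos k) (Nat.div_mul_cancel hd).symm
  obtain ⟨η, hη_val⟩ := hη.isUnit (ne_zero_of_dvd_ne_zero (NeZero.ne k) hd)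
  have hpow : η ^ (hμ.autToPow R σ : ZMod k).val = η ^ 1 := by
    ext
    rw [Units.val_pow_eq_pow_val, Units.val_pow_eq_pow_val, hη_val, pow_one, ← pow_mul, mul_comm,
      pow_mul, hμ.autToPow_spec R σ, ← map_pow, hσ]
  rw [pow_eq_pow_iff_modEq, ← orderOf_units, hη_val, ← hη.eq_orderOf,
    ← ZMod.natCast_eq_natCast_iff, Nat.cast_one, ZMod.natCast_val] at hpow
  ext
  rw [ZMod.unitsMap_val, hpow, Units.val_one]

theorem AlgEquiv.apply_eq_self_of_sq_eq_algebraMap_sq {R S : Type*} [CommRing R] [CommRing S]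
    [NoZeroDivisors S] [Algebra R S] (σ : S ≃ₐ[R] S) {y : S} {x : R}
    (h : y ^ 2 = algebraMap R S x ^ 2) : σ y = y := by
  rcases sq_eq_sq_iff_eq_or_eq_neg.mp h with rfl | rfl <;> simp

theorem IsPrimitiveRoot.sq_eq_neg_one_of_four_right {R : Type*} [CommRing R] [NoZeroDivisors R]
    {ζ : R} (h : IsPrimitiveRoot ζ 4) : ζ ^ 2 = -1 :=
  (h.pow (by norm_num) (by norm_num)).eq_neg_one_of_two_right

theorem IsCyclotomicExtension.isCyclic_algEquiv_two_pow {F L : Type*} [Field F] [Field L]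
    [Algebra F L] {n : ℕ} [IsCyclotomicExtension {2 ^ n} F L]
    (h : n ≤ 2 ∨ ∃ x : F, x ^ 2 = -1) : IsCyclic (L ≃ₐ[F] L) := by
  have hζ := zeta_spec (2 ^ n) F L
  have hinj := hζ.autToPow_injective F
  by_cases hn : n ≤ 2
  · have := (ZMod.isCyclic_units_two_pow_iff n).mpr hn
    exact isCyclic_of_injective _ hinj
  obtain ⟨x, hx⟩ := h.resolve_left hn
  obtain ⟨m, rfl⟩ : ∃ m, n = m + 2 := ⟨n - 2, by omega⟩
  have h4 : 4 ∣ 2 ^ (m + 2) := Dvd.intro_left (2 ^ m) (pow_add 2 m 2).symm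
  have hi : (zeta (2 ^ (m + 2)) F L ^ (2 ^ (m + 2) / 4)) ^ 2 = algebraMap F L x ^ 2 := by
    rw [← map_pow, hx, map_neg, map_one]
    exact (hζ.pow (NeZero.pos _) (Nat.div_mul_cancel h4).symm).sq_eq_neg_one_of_four_right
  have hker (σ : L ≃ₐ[F] L) : hζ.autToPow F σ ∈ (ZMod.unitsMap h4).ker :=
    hζ.unitsMap_autToPow_eq_one h4 (σ.apply_eq_self_of_sq_eq_algebraMap_sq hi)
  have := ZMod.isCyclic_ker_unitsMap_four m h4
  exact isCyclic_of_injective ((hζ.autToPow F).codRestrict _ hker)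
    fun σ τ hστ => hinj (congrArg Subtype.val hστ)

theorem lemma3_cyclotomic_two_power_cyclic_general
    {F : Type*} [Field F]
    (n : ℕ)
    (ζ : AlgebraicClosure F) (hζ : IsPrimitiveRoot ζ (2 ^ n))
    (h : n ≤ 2 ∨ ∃ x : F, x ^ 2 = -1) :
    IsCyclic ((IntermediateField.adjoin F ({ζ} : Set (AlgebraicClosure F))) ≃ₐ[F]
      (IntermediateField.adjoin F ({ζ} : Set (AlgebraicClosure F)))) := by
  have := hζ.intermediateField_adjoin_isCyclotomicExtension F
  exact IsCyclotomicExtension.isCyclic_algEquiv_two_pow h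

theorem lemma3_cyclotomic_two_power_cyclic
    {F : Type*} [Field F] (hchar : ringChar F ≠ 2)
    (n : ℕ) (hn : 1 ≤ n)
    (ζ : AlgebraicClosure F) (hζ : IsPrimitiveRoot ζ (2 ^ n))
    (h : n ≤ 2 ∨ ∃ x : F, x ^ 2 = -1) :
    IsCyclic ((IntermediateField.adjoin F ({ζ} : Set (AlgebraicClosure F))) ≃ₐ[F]
      (IntermediateField.adjoin F ({ζ} : Set (AlgebraicClosure F)))) :=
  lemma3_cyclotomic_two_power_cyclic_general n ζ hζ h
end

section
/- Let D be a unique factorization domain with field of fractions F, let ℓ ≥ 1, and let N_1,…,N_ℓ be nonzero elements of D. If no element of S_2 is a square in D, then at most one element of S_2 lies in −D² = {−d² : d ∈ D}; moreover, if −1 is a square in F, then no element of S_2 lies in −D². -/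
/-- The set `S_2` of products `N₁^{e₁} ⋯ N_{k-1}^{e_{k-1}} · N_k` with `1 ≤ k ≤ ℓ`
and `eᵢ ∈ {0, 1}`. -/
def Sset {D : Type*} [CommMonoid D] {ℓ : ℕ} (N : Fin ℓ → D) (p : ℕ) : Set D :=
  {x | ∃ k : Fin ℓ, ∃ e : Fin ℓ → ℕ, (∀ j, e j < p) ∧ e k = 1 ∧ (∀ j, k < j → e j = 0) ∧
    x = ∏ j, N j ^ e j}

/-!
Two elements `x ≠ y` of `S_2` have exponent vectors `e ≠ f` in `{0,1}^ℓ`, so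
`x * y = z * d²` where `z ∈ S_2` has the nonzero exponent vector `(e + f) mod 2`.
If `x = -a²` and `y = -b²` then `z * d² = (a b)²`, so `z` is a square in `F` and hence,
`D` being integrally closed, in `D`. If `-1 = c²` in `F`, then `x = -a²` is itself the square
`(c a)²` in `F`, hence in `D`.
-/

theorem exists_sq_of_sq_eq_algebraMap {D F : Type*} [CommRing D] [IsIntegrallyClosed D]
    [CommRing F] [Algebra D F] [IsFractionRing D F] {z : D} {t : F}
    (ht : t ^ 2 = algebraMap D F z) : ∃ d : D, z = d ^ 2 := by
  obtain ⟨d, hd⟩ := IsIntegrallyClosed.exists_algebraMap_eq_of_isIntegral_pow (R := D)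
    two_pos (ht ▸ isIntegral_algebraMap)
  exact ⟨d, IsFractionRing.injective D F (by rw [map_pow, hd, ht])⟩

theorem exists_sq_of_mul_sq_eq_sq {D : Type*} [CommRing D] [IsDomain D] [IsIntegrallyClosed D]
    {z c d : D} (hd : d ≠ 0) (h : z * d ^ 2 = c ^ 2) : ∃ r : D, z = r ^ 2 := by
  refine exists_sq_of_sq_eq_algebraMap (F := FractionRing D)
    (t := algebraMap D _ c / algebraMap D _ d) ?_
  have hd' : algebraMap D (FractionRing D) d ≠ 0 :=
    (map_ne_zero_iff _ (IsFractionRing.injective D _)).mpr hd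
  rw [div_pow, ← map_pow, ← map_pow, ← h, map_mul, map_pow]
  field_simp

theorem prod_pow_mul_prod_pow_eq_mod_two_mul_sq {ι M : Type*} [Fintype ι] [CommMonoid M]
    (N : ι → M) (e f : ι → ℕ) :
    (∏ j, N j ^ e j) * ∏ j, N j ^ f j =
      (∏ j, N j ^ ((e j + f j) % 2)) * (∏ j, N j ^ ((e j + f j) / 2)) ^ 2 := by
  rw [← Finset.prod_pow, ← Finset.prod_mul_distrib, ← Finset.prod_mul_distrib]
  refine Finset.prod_congr rfl fun j _ => ?_
  rw [← pow_mul, ← pow_add, ← pow_add, Nat.mod_add_div' (e j + f j) 2]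

theorem prod_pow_mem_Sset_two {D : Type*} [CommMonoid D] {ℓ : ℕ} (N : Fin ℓ → D)
    {g : Fin ℓ → ℕ} (hg : ∀ j, g j < 2) (hg0 : g ≠ 0) : ∏ j, N j ^ g j ∈ Sset N 2 := by
  set s := Finset.univ.filter fun j => g j ≠ 0
  have hs : s.Nonempty := by
    obtain ⟨j, hj⟩ := Function.ne_iff.mp hg0
    exact ⟨j, by simpa [s] using hj⟩
  refine ⟨s.max' hs, g, hg, ?_, fun j hj => ?_, rfl⟩
  · have hlt := hg (s.max' hs)
    have hne : g (s.max' hs) ≠ 0 := by simpa [s] using s.max'_mem hs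
    omega
  · by_contra hj0
    exact (s.le_max' j (by simpa [s] using hj0)).not_gt hj

theorem exists_mul_eq_mul_sq_of_mem_Sset_two {D : Type*} [CommMonoidWithZero D]
    [NoZeroDivisors D] [Nontrivial D] {ℓ : ℕ} {N : Fin ℓ → D} (hN : ∀ i, N i ≠ 0)
    {x y : D} (hx : x ∈ Sset N 2) (hy : y ∈ Sset N 2) (hxy : x ≠ y) :
    ∃ z ∈ Sset N 2, ∃ d ≠ 0, x * y = z * d ^ 2 := by
  obtain ⟨-, e, he, -, -, rfl⟩ := hx
  obtain ⟨-, f, hf, -, -, rfl⟩ := hy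
  have hef : (fun j => (e j + f j) % 2) ≠ 0 := by
    refine fun h0 => hxy (Finset.prod_congr rfl fun j _ => ?_)
    have hj : (e j + f j) % 2 = 0 := congr_fun h0 j
    rw [show e j = f j by have := he j; have := hf j; omega]
  exact ⟨_, prod_pow_mem_Sset_two N (fun j => Nat.mod_lt _ two_pos) hef, _,
    Finset.prod_ne_zero_iff.mpr fun j _ => pow_ne_zero _ (hN j),
    prod_pow_mul_prod_pow_eq_mod_two_mul_sq N e f⟩

theorem eq_of_mem_Sset_two_of_eq_neg_sq {D : Type*} [CommRing D] [IsDomain D]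
    [IsIntegrallyClosed D] {ℓ : ℕ} {N : Fin ℓ → D} (hN : ∀ i, N i ≠ 0)
    (h : ¬ ∃ x ∈ Sset N 2, ∃ d : D, x = d ^ 2) {x y a b : D}
    (hx : x ∈ Sset N 2) (hy : y ∈ Sset N 2) (ha : x = -a ^ 2) (hb : y = -b ^ 2) : x = y := by
  by_contra hxy
  obtain ⟨z, hz, d, hd, hzd⟩ := exists_mul_eq_mul_sq_of_mem_Sset_two hN hx hy hxy
  have : z * d ^ 2 = (a * b) ^ 2 := by rw [← hzd, ha, hb]; ring
  exact h ⟨z, hz, exists_sq_of_mul_sq_eq_sq hd this⟩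

theorem lemma5_general
    {D F : Type*} [CommRing D] [IsDomain D] [UniqueFactorizationMonoid D]
    [Field F] [Algebra D F] [IsFractionRing D F]
    {ℓ : ℕ} (N : Fin ℓ → D) (hN : ∀ i, N i ≠ 0)
    (h : ¬ ∃ x ∈ Sset N 2, ∃ d : D, x = d ^ 2) :
    {x ∈ Sset N 2 | ∃ d : D, x = -d ^ 2}.ncard ≤ 1 ∧
    ((∃ c : F, c ^ 2 = -1) → {x ∈ Sset N 2 | ∃ d : D, x = -d ^ 2} = ∅) := by
  constructor
  · have hsub : {x ∈ Sset N 2 | ∃ d : D, x = -d ^ 2}.Subsingleton := by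
      rintro x ⟨hx, a, ha⟩ y ⟨hy, b, hb⟩
      exact eq_of_mem_Sset_two_of_eq_neg_sq hN h hx hy ha hb
    exact (Set.ncard_le_one hsub.finite).mpr hsub
  · rintro ⟨c, hc⟩
    refine Set.eq_empty_iff_forall_notMem.mpr fun x ⟨hx, a, ha⟩ => h ⟨x, hx, ?_⟩
    refine exists_sq_of_sq_eq_algebraMap (t := c * algebraMap D F a) ?_
    rw [mul_pow, hc, ha, map_neg, map_pow, neg_one_mul]

theorem lemma5
    {D F : Type*} [CommRing D] [IsDomain D] [UniqueFactorizationMonoid D]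
    [Field F] [Algebra D F] [IsFractionRing D F]
    {ℓ : ℕ} (hℓ : 1 ≤ ℓ) (N : Fin ℓ → D) (hN : ∀ i, N i ≠ 0)
    (h : ¬ ∃ x ∈ Sset N 2, ∃ d : D, x = d ^ 2) :
    {x ∈ Sset N 2 | ∃ d : D, x = -d ^ 2}.ncard ≤ 1 ∧
    ((∃ c : F, c ^ 2 = -1) → {x ∈ Sset N 2 | ∃ d : D, x = -d ^ 2} = ∅) :=
  lemma5_general N hN h
end

section
/- Let D be a unique factorization domain with field of fractions F, let ℓ ≥ 1, let N_1,…,N_ℓ be nonzero elements of D, let p be a prime with char F ≠ p, and let m_i = p^{n_i} with n_i ≥ 1 for each i. Let m = lcm(m_1,…,m_ℓ), let ζ be a primitive m-th root of unity in an algebraic closure of F, and let K = F(ζ). If no element of S_p is a p-th power of an element of K, then for every choice of roots α_i of X^{m_i} − N_i in the algebraic closure, [K(α_1,…,α_ℓ) : K] = m_1⋯m_ℓ. -/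
open Polynomial IntermediateField

lemma exists_pow_eq_of_pow_eq_pow_of_coprime {G : Type*} [CommGroupWithZero G] {c u : G}
    {f p : ℕ} (hc : c ≠ 0) (hfp : f.Coprime p) (h : u ^ p = c ^ f) : ∃ w : G, w ^ p = c := by
  refine ⟨u ^ f.gcdA p * c ^ f.gcdB p, ?_⟩
  have hbezout : (f : ℤ) * f.gcdA p + p * f.gcdB p = 1 := by
    rw [← Nat.gcd_eq_gcd_ab, hfp, Nat.cast_one]
  calc (u ^ f.gcdA p * c ^ f.gcdB p) ^ p
      = (u ^ p) ^ f.gcdA p * c ^ ((p : ℤ) * f.gcdB p) := by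
        rw [mul_pow, ← zpow_natCast, ← zpow_natCast, ← zpow_natCast, ← zpow_mul, ← zpow_mul,
          ← zpow_mul, mul_comm (f.gcdA p), mul_comm (f.gcdB p)]
    _ = c ^ ((f : ℤ) * f.gcdA p + p * f.gcdB p) := by
        rw [h, ← zpow_natCast, ← zpow_mul, zpow_add₀ hc]
    _ = c := by rw [hbezout, zpow_one]

section PowIndep

variable {ι M : Type*} [Fintype ι]

/-- For units `v i`: their classes, `i ∈ s`, are `𝔽_p`-linearly independent in `Mˣ / (Mˣ) ^ p`. -/
def PowIndepOn [CommMonoid M] (p : ℕ) (s : Set ι) (v : ι → M) : Prop :=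
  ∀ e : ι → ℕ, (∀ i, e i < p) → (∀ i ∉ s, e i = 0) → (∃ u : M, u ^ p = ∏ i, v i ^ e i) → e = 0

variable [DecidableEq ι]

lemma prod_pow_update [CommMonoid M] (v : ι → M) (e : ι → ℕ) (i : ι) (k : ℕ) :
    ∏ j, v j ^ Function.update e i k j = v i ^ k * ∏ j ∈ {i}ᶜ, v j ^ e j := by
  rw [Fintype.prod_eq_mul_prod_compl i, Function.update_self]
  congr 1
  refine Finset.prod_congr rfl fun j hj => ?_
  rw [Function.update_of_ne (by simpa using hj)]

lemma prod_update_pow [CommMonoid M] (w : ι → M) (e : ι → ℕ) (i : ι) (x : M) :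
    ∏ j, Function.update w i x j ^ e j = x ^ e i * ∏ j, w j ^ Function.update e i 0 j := by
  rw [prod_pow_update, pow_zero, one_mul, Fintype.prod_eq_mul_prod_compl i, Function.update_self]
  congr 1
  refine Finset.prod_congr rfl fun j hj => ?_
  rw [Function.update_of_ne (by simpa using hj)]

lemma PowIndepOn.forall_pow_ne [CommMonoid M] {p : ℕ} {s : Set ι} {v : ι → M}
    (hv : PowIndepOn p s v) (hp : 1 < p) {i : ι} (hi : i ∈ s) (u : M) : u ^ p ≠ v i := by
  intro hu
  have h := congrFun (hv (Function.update 0 i 1) (fun j => ?_) (fun j hj => ?_) ⟨u, ?_⟩) i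
  · simp at h
  · rw [Function.update_apply]
    split_ifs
    · exact hp
    · exact hp.pos
  · simp [show j ≠ i by rintro rfl; exact hj hi]
  · simp [prod_pow_update, hu]

lemma PowIndepOn.prod_pow_ne_zero [CommMonoidWithZero M] [NoZeroDivisors M] [Nontrivial M]
    {p : ℕ} {s : Set ι} {v : ι → M} (hv : PowIndepOn p s v) (hp : 1 < p) {e : ι → ℕ}
    (he : ∀ i ∉ s, e i = 0) : ∏ i, v i ^ e i ≠ 0 := by
  refine Finset.prod_ne_zero_iff.mpr fun i _ => ?_
  by_cases hi : i ∈ s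
  · exact pow_ne_zero _ fun h0 => hv.forall_pow_ne hp hi 0 (by rw [h0, zero_pow (by omega)])
  · simp [he i hi]

end PowIndep

lemma IntermediateField.adjoin_simple_gen_eq_top {F E : Type*} [Field F] [Field E] [Algebra F E]
    (α : E) : F⟮AdjoinSimple.gen F α⟯ = ⊤ := by
  apply lift_injective
  rw [lift_adjoin_simple, lift_top]
  rfl

lemma IntermediateField.AdjoinSimple.gen_pow_eq_algebraMap {F E : Type*} [Field F] [Field E]
    [Algebra F E] {α : E} {n : ℕ} {b : F} (h : α ^ n = algebraMap F E b) :
    AdjoinSimple.gen F α ^ n = algebraMap F F⟮α⟯ b :=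
  Subtype.ext (by simpa using h)

lemma IsPrimitiveRoot.isSquare_neg_one {R : Type*} [CommRing R] [NoZeroDivisors R] {ι : R}
    (h : IsPrimitiveRoot ι 4) : IsSquare (-1 : R) :=
  ⟨ι, ((h.pow (by norm_num) (by norm_num : 4 = 2 * 2)).eq_neg_one_of_two_right).symm.trans (sq ι)⟩

lemma exists_pow_eq_neg_one_pow_succ {B : Type*} [Field B] {p : ℕ} (hp : p.Prime)
    (hsq : p = 2 → IsSquare (-1 : B)) : ∃ c : B, c ^ p = (-1) ^ (p + 1) := by
  rcases hp.eq_two_or_odd' with rfl | hodd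
  · obtain ⟨c, hc⟩ := hsq rfl
    exact ⟨c, by rw [sq, ← hc]; norm_num⟩
  · exact ⟨1, by rw [one_pow, hodd.add_one.neg_one_pow]⟩

section KummerStep

variable {B Ω : Type*} [Field B] [Field Ω] [Algebra B Ω] {p : ℕ} (hp : p.Prime) {b : B}
  (hb : ∀ u : B, u ^ p ≠ b) {δ : Ω} (hδ : δ ^ p = algebraMap B Ω b)

include hp hδ

lemma isIntegral_of_pow_eq_algebraMap : IsIntegral B δ :=
  ⟨X ^ p - C b, monic_X_pow_sub_C b hp.ne_zero, by simp [hδ]⟩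

include hb

lemma minpoly_eq_X_pow_sub_C_of_pow_eq : minpoly B δ = X ^ p - C b :=
  (minpoly.eq_of_irreducible_of_monic (X_pow_sub_C_irreducible_of_prime hp hb) (by simp [hδ])
    (monic_X_pow_sub_C b hp.ne_zero)).symm

lemma finrank_adjoin_simple_of_pow_eq : Module.finrank B B⟮δ⟯ = p := by
  rw [adjoin.finrank (isIntegral_of_pow_eq_algebraMap hp hδ),
    minpoly_eq_X_pow_sub_C_of_pow_eq hp hb hδ, natDegree_X_pow_sub_C]

lemma norm_adjoinSimple_gen_of_pow_eq :
    Algebra.norm B (AdjoinSimple.gen B δ) = (-1) ^ (p + 1) * b := by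
  have hint := isIntegral_of_pow_eq_algebraMap hp hδ
  rw [← adjoin.powerBasis_gen hint, Algebra.PowerBasis.norm_gen_eq_coeff_zero_minpoly,
    adjoin.powerBasis_dim, adjoin.powerBasis_gen, minpoly_gen,
    minpoly_eq_X_pow_sub_C_of_pow_eq hp hb hδ]
  simp [hp.ne_zero.symm, pow_succ]

lemma isSplittingField_adjoin_simple_of_pow_eq {ω : B} (hω : IsPrimitiveRoot ω p) :
    IsSplittingField B B⟮δ⟯ (X ^ p - C b) := by
  have hfr := finrank_adjoin_simple_of_pow_eq hp hb hδ
  have : FiniteDimensional B B⟮δ⟯ :=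
    adjoin.finiteDimensional (isIntegral_of_pow_eq_algebraMap hp hδ)
  have hprim : (primitiveRoots (Module.finrank B B⟮δ⟯) B).Nonempty :=
    ⟨ω, (mem_primitiveRoots (hfr ▸ hp.pos)).mpr (hfr ▸ hω)⟩
  have := isSplittingField_X_pow_sub_C_of_root_adjoin_eq_top hprim
    (hfr ▸ AdjoinSimple.gen_pow_eq_algebraMap hδ) (adjoin_simple_gen_eq_top δ)
  rwa [hfr] at this

lemma exists_pow_eq_mul_pow_of_pow_eq_algebraMap {ω : B} (hω : IsPrimitiveRoot ω p)
    (β : B⟮δ⟯) {t : B} (hβ : β ^ p = algebraMap B B⟮δ⟯ t) :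
    ∃ j < p, ∃ u : B, u ^ p = t * b ^ j := by
  rcases eq_or_ne β 0 with rfl | hβ0
  · exact ⟨0, hp.pos, 0, (algebraMap B B⟮δ⟯).injective (by simpa using hβ)⟩
  have : NeZero p := ⟨hp.ne_zero⟩
  have : FiniteDimensional B B⟮δ⟯ :=
    adjoin.finiteDimensional (isIntegral_of_pow_eq_algebraMap hp hδ)
  have hirr := X_pow_sub_C_irreducible_of_prime hp hb
  have := isSplittingField_adjoin_simple_of_pow_eq hp hb hδ hω
  have : IsGalois B B⟮δ⟯ := isGalois_of_isSplittingField_X_pow_sub_C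
    ⟨ω, (mem_primitiveRoots hp.pos).mpr hω⟩ hirr _
  set g := AdjoinSimple.gen B δ
  have hg : g ^ p = algebraMap B B⟮δ⟯ b := AdjoinSimple.gen_pow_eq_algebraMap hδ
  set ω' := algebraMap B B⟮δ⟯ ω
  have hω' : IsPrimitiveRoot ω' p := hω.map_of_injective (algebraMap B B⟮δ⟯).injective
  set E := autEquivZmod hirr B⟮δ⟯ hω
  set σ := E.symm (Multiplicative.ofAdd 1)
  have hσg : σ g = ω' * g := by
    simpa [Algebra.smul_def] using autEquivZmod_symm_apply_natCast hirr B⟮δ⟯ hg hω 1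
  have hσ_pow : ∀ τ, ∃ k : ℕ, τ = σ ^ k := fun τ =>
    ⟨(Multiplicative.toAdd (E τ)).val, E.injective (by simp [σ, ← ofAdd_nsmul])⟩
  have hσβ : σ β ≠ 0 := (map_ne_zero σ).mpr hβ0
  -- `σ β / β` is a `p`-th root of unity, so some `β * g ^ j` is fixed by the generator `σ`
  obtain ⟨j, hjp, hj⟩ : ∃ j < p, ω' ^ j = β / σ β := hω'.eq_pow_of_pow_eq_one (by
    rw [div_pow, ← map_pow, hβ, AlgEquiv.commutes,
      div_self (by simpa [hβ] using pow_ne_zero p hβ0)])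
  have hσγ : σ (β * g ^ j) = β * g ^ j := by
    rw [map_mul, map_pow, hσg, mul_pow, hj]
    field_simp
  obtain ⟨u, hu⟩ := (IsGalois.mem_range_algebraMap_iff_fixed (β * g ^ j)).mpr fun τ => by
    obtain ⟨k, rfl⟩ := hσ_pow τ
    rw [AlgEquiv.coe_pow]
    exact Function.IsFixedPt.iterate hσγ k
  refine ⟨j, hjp, u, (algebraMap B B⟮δ⟯).injective ?_⟩
  rw [map_pow, hu, map_mul, map_pow, ← hg, ← hβ, mul_pow, ← pow_mul, ← pow_mul, mul_comm j p]

lemma pow_ne_adjoinSimple_gen_pow_mul_algebraMap (hsq : p = 2 → IsSquare (-1 : B)) (β : B⟮δ⟯)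
    {f : ℕ} (hf0 : f ≠ 0) (hfp : f < p) {t : B} (ht : t ≠ 0) :
    β ^ p ≠ AdjoinSimple.gen B δ ^ f * algebraMap B B⟮δ⟯ t := by
  intro hβ
  have : FiniteDimensional B B⟮δ⟯ :=
    adjoin.finiteDimensional (isIntegral_of_pow_eq_algebraMap hp hδ)
  have hnorm : (Algebra.norm B β / t) ^ p = ((-1) ^ (p + 1) * b) ^ f := by
    rw [div_pow, ← map_pow, hβ, map_mul, map_pow, Algebra.norm_algebraMap,
      finrank_adjoin_simple_of_pow_eq hp hb hδ, norm_adjoinSimple_gen_of_pow_eq hp hb hδ,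
      mul_div_assoc, div_self (pow_ne_zero p ht), mul_one]
  obtain ⟨w, hw⟩ := exists_pow_eq_of_pow_eq_pow_of_coprime
    (mul_ne_zero (pow_ne_zero _ (neg_ne_zero.mpr one_ne_zero))
      fun hb0 => hb 0 (by simp [hb0, hp.ne_zero]))
    (Nat.coprime_of_lt_prime hf0 hfp hp).symm hnorm
  obtain ⟨c, hc⟩ := exists_pow_eq_neg_one_pow_succ hp hsq
  refine hb (w / c) ?_
  rw [div_pow, hw, hc, mul_div_cancel_left₀ _ (pow_ne_zero _ (neg_ne_zero.mpr one_ne_zero))]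

end KummerStep

section Family

variable {ι B Ω : Type*} [Fintype ι] [DecidableEq ι] [Field B] [Field Ω] [Algebra B Ω] {p : ℕ}
  (hp : p.Prime) {s : Set ι} {v : ι → B} (hv : PowIndepOn p s v) {i : ι} (hi : i ∈ s) {δ : Ω}
  (hδ : δ ^ p = algebraMap B Ω (v i))

include hp hv hi hδ

lemma PowIndepOn.update_adjoinSimple_gen_diff {ω : B} (hω : IsPrimitiveRoot ω p) :
    PowIndepOn p (s \ {i})
      (Function.update (fun j => algebraMap B B⟮δ⟯ (v j)) i (AdjoinSimple.gen B δ)) := by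
  rintro e he hes ⟨β, hβ⟩
  have hei : e i = 0 := hes i fun h => h.2 rfl
  have hupd : Function.update e i 0 = e := by rw [← hei, Function.update_eq_self]
  rw [prod_update_pow, hei, hupd, pow_zero, one_mul] at hβ
  simp_rw [← map_pow, ← map_prod] at hβ
  obtain ⟨k, hkp, u, hu⟩ := exists_pow_eq_mul_pow_of_pow_eq_algebraMap hp
    (hv.forall_pow_ne hp.one_lt hi) hδ hω β hβ
  have he' := hv (Function.update e i k) (fun j => ?_) (fun j hj => ?_) ⟨u, ?_⟩
  · funext j
    rcases eq_or_ne j i with rfl | hji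
    · exact hei
    · simpa [hji] using congrFun he' j
  · rcases eq_or_ne j i with rfl | hji <;> simp [*]
  · rw [Function.update_of_ne (by rintro rfl; exact hj hi)]
    exact hes j fun h => hj h.1
  · rw [hu, prod_pow_update, Fintype.prod_eq_mul_prod_compl i, hei, pow_zero, one_mul, mul_comm]

lemma PowIndepOn.update_adjoinSimple_gen {ω : B} (hω : IsPrimitiveRoot ω p)
    (hsq : p = 2 → IsSquare (-1 : B)) :
    PowIndepOn p s
      (Function.update (fun j => algebraMap B B⟮δ⟯ (v j)) i (AdjoinSimple.gen B δ)) := by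
  rintro e he hes ⟨β, hβ⟩
  by_cases hei : e i = 0
  · exact hv.update_adjoinSimple_gen_diff hp hi hδ hω e he
      (fun j hj => if hji : j = i then hji ▸ hei else hes j fun h => hj ⟨h, hji⟩) ⟨β, hβ⟩
  rw [prod_update_pow] at hβ
  simp_rw [← map_pow, ← map_prod] at hβ
  refine (pow_ne_adjoinSimple_gen_pow_mul_algebraMap hp (hv.forall_pow_ne hp.one_lt hi) hδ hsq β
    hei (he i) (hv.prod_pow_ne_zero hp.one_lt fun j hj => ?_) hβ).elim
  rw [Function.update_of_ne (by rintro rfl; exact hj hi)]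
  exact hes j hj

end Family

universe u

theorem finrank_adjoin_range_of_powIndepOn {ι : Type*} [Fintype ι] [DecidableEq ι]
    {B Ω : Type u} [Field B] [Field Ω] [Algebra B Ω] {p : ℕ} (hp : p.Prime) {ω : B}
    (hω : IsPrimitiveRoot ω p) (n : ι → ℕ) (hsq : p = 2 → (∃ i, 2 ≤ n i) → IsSquare (-1 : B))
    {N : ι → B} (hN : PowIndepOn p {i | n i ≠ 0} N) {α : ι → Ω}
    (hα : ∀ i, α i ^ p ^ n i = algebraMap B Ω (N i)) :
    Module.finrank B (adjoin B (Set.range α)) = p ^ ∑ i, n i := by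
  induction hk : ∑ i, n i generalizing B n N with
  | zero =>
    have hn : ∀ i, n i = 0 := by simpa using hk
    rw [pow_zero, adjoin_eq_bot_iff.mpr, IntermediateField.finrank_bot]
    rintro _ ⟨i, rfl⟩
    exact mem_bot.mpr ⟨N i, by simpa [hn] using (hα i).symm⟩
  | succ k ih =>
    obtain ⟨i, hi⟩ : ∃ i, n i ≠ 0 := by
      by_contra! h
      simp [h] at hk
    set δ := α i ^ p ^ (n i - 1)
    have hδ : δ ^ p = algebraMap B Ω (N i) := by
      rw [← pow_mul, ← pow_succ, Nat.sub_add_cancel (Nat.pos_of_ne_zero hi), hα i]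
    set L := B⟮δ⟯
    set n' := Function.update n i (n i - 1)
    set N' := Function.update (fun j => algebraMap B L (N j)) i (AdjoinSimple.gen B δ)
    have hk' : ∑ j, n' j = k := by
      rw [Finset.sum_update_of_mem (Finset.mem_univ i)]
      rw [Finset.sum_eq_add_sum_sdiff_singleton_of_mem (Finset.mem_univ i)] at hk
      omega
    have hα' : ∀ j, α j ^ p ^ n' j = algebraMap L Ω (N' j) := by
      intro j
      rcases eq_or_ne j i with rfl | hji
      · simp [n', N', δ]
      · simp [n', N', hji, hα j, ← IsScalarTower.algebraMap_apply]
    have hN' : PowIndepOn p {j | n' j ≠ 0} N' := by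
      -- if `n i = 1`, then `α i = δ` already lies in `L` and leaves the support
      by_cases h1 : n i = 1
      · convert hN.update_adjoinSimple_gen_diff hp hi hδ hω using 1
        ext j
        rcases eq_or_ne j i with rfl | hji <;> simp [n', *]
      · convert hN.update_adjoinSimple_gen hp hi hδ hω (fun hp2 => hsq hp2 ⟨i, by omega⟩) using 1
        ext j
        rcases eq_or_ne j i with rfl | hji <;> simp [n', *]
        omega
    have hsq' : p = 2 → (∃ j, 2 ≤ n' j) → IsSquare (-1 : L) := by
      rintro hp2 ⟨j, hj⟩
      have hnj : n' j ≤ n j := by rcases eq_or_ne j i with rfl | hji <;> simp [n', *]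
      obtain ⟨c, hc⟩ := hsq hp2 ⟨j, hj.trans hnj⟩
      exact ⟨algebraMap B L c, by rw [← map_mul, ← hc, map_neg, map_one]⟩
    have htower : (adjoin L (Set.range α)).restrictScalars B = adjoin B (Set.range α) := by
      rw [adjoin_adjoin_left, Set.singleton_union]
      refine le_antisymm (adjoin_le_iff.mpr (Set.insert_subset_iff.mpr ⟨?_, subset_adjoin _ _⟩))
        (adjoin.mono _ _ _ (Set.subset_insert _ _))
      exact pow_mem (subset_adjoin B _ (Set.mem_range_self i)) _
    calc Module.finrank B (adjoin B (Set.range α))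
        = Module.finrank B L * Module.finrank L (adjoin L (Set.range α)) := by
          rw [← htower]
          exact (Module.finrank_mul_finrank B L (adjoin L (Set.range α))).symm
      _ = p ^ (k + 1) := by
          rw [finrank_adjoin_simple_of_pow_eq hp (hN.forall_pow_ne hp.one_lt hi) hδ,
            ih (hω.map_of_injective (algebraMap B L).injective) n' hsq' hN' hα' hk', pow_succ']

section Normalization

variable {G : Type*} [CommGroupWithZero G] {ι : Type*} [Fintype ι] {p : ℕ} {v : ι → G}

lemma exists_pow_eq_prod_pow_mod (hv : ∀ i, v i ≠ 0) {e : ι → ℕ} {u : G}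
    (hu : u ^ p = ∏ i, v i ^ e i) : ∃ w : G, w ^ p = ∏ i, v i ^ (e i % p) := by
  have hsplit : ∏ i, v i ^ e i = (∏ i, v i ^ (e i / p)) ^ p * ∏ i, v i ^ (e i % p) := by
    rw [← Finset.prod_pow, ← Finset.prod_mul_distrib]
    refine Finset.prod_congr rfl fun i _ => ?_
    rw [← pow_mul, ← pow_add, Nat.div_add_mod']
  have hne : ∏ i, v i ^ (e i / p) ≠ 0 :=
    Finset.prod_ne_zero_iff.mpr fun i _ => pow_ne_zero _ (hv i)
  refine ⟨u / ∏ i, v i ^ (e i / p), ?_⟩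
  rw [div_pow, hu, hsplit, mul_div_cancel_left₀ _ (pow_ne_zero _ hne)]

lemma powIndepOn_univ_of_forall_mem_Sset {ℓ : ℕ} (hp : p.Prime) {v : Fin ℓ → G}
    (hv : ∀ i, v i ≠ 0) (h : ∀ x ∈ Sset v p, ∀ u : G, u ^ p ≠ x) : PowIndepOn p Set.univ v := by
  rintro e he - ⟨u, hu⟩
  by_contra hne
  obtain ⟨k, hk, hkmax⟩ : ∃ k, e k ≠ 0 ∧ ∀ j, k < j → e j = 0 := by
    obtain ⟨j, hj⟩ := Function.ne_iff.mp hne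
    obtain ⟨k, hk, hkmax⟩ := Finset.exists_max_image (Finset.univ.filter (e · ≠ 0)) id
      ⟨j, by simpa using hj⟩
    refine ⟨k, (Finset.mem_filter.mp hk).2, fun j hkj => ?_⟩
    by_contra hj
    exact (hkmax j (by simpa using hj)).not_gt hkj
  -- rescale `e` so that its last nonzero exponent becomes `1`
  obtain ⟨r, -, hr⟩ := Nat.exists_mul_mod_eq_one_of_coprime
    (Nat.coprime_of_lt_prime hk (he k) hp).symm hp.one_lt
  obtain ⟨w, hw⟩ := exists_pow_eq_prod_pow_mod hv (e := fun i => e i * r) (u := u ^ r) (by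
    rw [← pow_mul, mul_comm r p, pow_mul, hu, ← Finset.prod_pow]
    simp_rw [← pow_mul])
  exact h _ ⟨k, fun i => e i * r % p, fun i => Nat.mod_lt _ hp.pos, hr,
    fun j hj => by simp [hkmax j hj], rfl⟩ w hw

end Normalization

theorem lemma7_general
    {D F : Type*} [CommRing D]
    [Field F] [Algebra D F] [IsFractionRing D F]
    {ℓ : ℕ} (hℓ : 1 ≤ ℓ) (N : Fin ℓ → D) (hN : ∀ i, N i ≠ 0)
    (p : ℕ) (hp : p.Prime)
    (n : Fin ℓ → ℕ) (hn : ∀ i, 1 ≤ n i) (m : Fin ℓ → ℕ) (hm : ∀ i, m i = p ^ n i)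
    (ζ : AlgebraicClosure F) (hζ : IsPrimitiveRoot ζ (Finset.univ.lcm m))
    (h : ¬ ∃ x ∈ Sset N p,
      ∃ κ ∈ IntermediateField.adjoin F ({ζ} : Set (AlgebraicClosure F)),
        κ ^ p = algebraMap F (AlgebraicClosure F) (algebraMap D F x))
    (α : Fin ℓ → AlgebraicClosure F)
    (hα : ∀ i, α i ^ m i = algebraMap F (AlgebraicClosure F) (algebraMap D F (N i))) :
    Module.finrank (IntermediateField.adjoin F ({ζ} : Set (AlgebraicClosure F)))
      (IntermediateField.adjoin
        (IntermediateField.adjoin F ({ζ} : Set (AlgebraicClosure F)))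
        (Set.range α)) = ∏ i, m i := by
  set K := F⟮ζ⟯
  set M := Finset.univ.lcm m
  have hM : 0 < M := Nat.pos_of_ne_zero fun h0 => by
    obtain ⟨i, -, hi⟩ := Finset.lcm_eq_zero_iff.mp h0
    exact pow_ne_zero _ hp.ne_zero (hm i ▸ hi)
  have hζK : IsPrimitiveRoot (AdjoinSimple.gen F ζ) M :=
    .of_map_of_injective (f := algebraMap K _) (by rwa [AdjoinSimple.algebraMap_gen])
      (algebraMap K _).injective
  have hroot : ∀ i d, d ∣ p ^ n i → ∃ ω : K, IsPrimitiveRoot ω d := fun i d hd =>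
    ⟨_, hζK.pow hM
      (Nat.div_mul_cancel (hd.trans (hm i ▸ Finset.dvd_lcm (Finset.mem_univ i)))).symm⟩
  obtain ⟨ω, hω⟩ := hroot ⟨0, hℓ⟩ p (dvd_pow_self p (by have := hn ⟨0, hℓ⟩; omega))
  have hsq : p = 2 → (∃ i, 2 ≤ n i) → IsSquare (-1 : K) := by
    rintro rfl ⟨i, hi⟩
    obtain ⟨ι, hι⟩ := hroot i 4 (pow_dvd_pow 2 hi)
    exact hι.isSquare_neg_one
  set N' : Fin ℓ → K := fun i => algebraMap F K (algebraMap D F (N i))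
  have hN' : PowIndepOn p {i | n i ≠ 0} N' := by
    have : {i | n i ≠ 0} = Set.univ := Set.eq_univ_of_forall fun i => by have := hn i; simp; omega
    rw [this]
    refine powIndepOn_univ_of_forall_mem_Sset hp (fun i => ?_) ?_
    · simpa [N'] using (IsFractionRing.injective D F).ne (hN i)
    · rintro _ ⟨k, e, he, hek, hek', rfl⟩ u hu
      refine h ⟨_, ⟨k, e, he, hek, hek', rfl⟩, u, u.2, ?_⟩
      simpa [N'] using congrArg (algebraMap K (AlgebraicClosure F)) hu
  rw [finrank_adjoin_range_of_powIndepOn hp hω n hsq hN' (α := α)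
    (fun i => by rw [← hm i]; exact hα i), ← Finset.prod_pow_eq_pow_sum]
  exact Finset.prod_congr rfl fun i _ => (hm i).symm

theorem lemma7
    {D F : Type*} [CommRing D] [IsDomain D] [UniqueFactorizationMonoid D]
    [Field F] [Algebra D F] [IsFractionRing D F]
    {ℓ : ℕ} (hℓ : 1 ≤ ℓ) (N : Fin ℓ → D) (hN : ∀ i, N i ≠ 0)
    (p : ℕ) (hp : p.Prime) (hchar : ringChar F ≠ p)
    (n : Fin ℓ → ℕ) (hn : ∀ i, 1 ≤ n i) (m : Fin ℓ → ℕ) (hm : ∀ i, m i = p ^ n i)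
    (ζ : AlgebraicClosure F) (hζ : IsPrimitiveRoot ζ (Finset.univ.lcm m))
    (h : ¬ ∃ x ∈ Sset N p,
      ∃ κ ∈ IntermediateField.adjoin F ({ζ} : Set (AlgebraicClosure F)),
        κ ^ p = algebraMap F (AlgebraicClosure F) (algebraMap D F x))
    (α : Fin ℓ → AlgebraicClosure F)
    (hα : ∀ i, α i ^ m i = algebraMap F (AlgebraicClosure F) (algebraMap D F (N i))) :
    Module.finrank (IntermediateField.adjoin F ({ζ} : Set (AlgebraicClosure F)))
      (IntermediateField.adjoin
        (IntermediateField.adjoin F ({ζ} : Set (AlgebraicClosure F)))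
        (Set.range α)) = ∏ i, m i :=
  lemma7_general hℓ N hN p hp n hn m hm ζ hζ h α hα
end

section
/- Let D be a unique factorization domain with field of fractions F of characteristic ≠ 2, let ℓ ≥ 1, let N_1,…,N_ℓ be nonzero elements of D, and let m_i = 2^{n_i} with n_i ≥ 1 for each i. Let m = lcm(m_1,…,m_ℓ), ζ a primitive m-th root of unity in an algebraic closure of F, and K = F(ζ). Assume no element of S_2 is a square in D and that exactly one element M of S_2 is a square in K; write M = N_1^{f_1}⋯N_ℓ^{f_ℓ} with f_i ∈ {0,1} and assume M^♯ = {i : f_i = 1} is nonempty. If 4 divides m and no element of S_2 lies in −D², then for every i ∈ M^♯ no root of X² + N_i lies in F(V_i) (where V_i is the set of chosen roots α_j of X^{m_j} − N_j for j ≠ i), and consequently [F(α_1,…,α_ℓ) : F] = m_1⋯m_ℓ for every choice of roots α_i of X^{m_i} − N_i in the algebraic closure. -/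
open IntermediateField Module Polynomial

section QuadraticExtension

variable {F Ω : Type*} [Field F] [Field Ω] [Algebra F Ω] {E : IntermediateField F Ω} {β : Ω}

theorem isIntegral_of_sq_mem (hβ2 : β ^ 2 ∈ E) : IsIntegral E β :=
  ⟨X ^ 2 - C ⟨β ^ 2, hβ2⟩, monic_X_pow_sub_C _ two_ne_zero, by simp⟩

theorem exists_eq_add_mul_of_mem_sup_adjoin (hβ2 : β ^ 2 ∈ E) {y : Ω} (hy : y ∈ E ⊔ F⟮β⟯) :
    ∃ u ∈ E, ∃ v ∈ E, y = u + v * β := by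
  rw [← restrictScalars_adjoin_eq_sup, mem_restrictScalars, ← mem_toSubalgebra,
    adjoin_simple_toSubalgebra_of_isAlgebraic (isIntegral_of_sq_mem hβ2).isAlgebraic] at hy
  induction hy using Algebra.adjoin_induction with
  | mem x hx => exact ⟨0, zero_mem E, 1, one_mem E, by rw [Set.mem_singleton_iff.1 hx]; ring⟩
  | algebraMap r => exact ⟨r, r.2, 0, zero_mem E, by simp⟩
  | add x y _ _ hx hy =>
    obtain ⟨u, hu, v, hv, rfl⟩ := hx
    obtain ⟨u', hu', v', hv', rfl⟩ := hy
    exact ⟨u + u', add_mem hu hu', v + v', add_mem hv hv', by ring⟩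
  | mul x y _ _ hx hy =>
    obtain ⟨u, hu, v, hv, rfl⟩ := hx
    obtain ⟨u', hu', v', hv', rfl⟩ := hy
    exact ⟨u * u' + v * v' * β ^ 2, add_mem (mul_mem hu hu') (mul_mem (mul_mem hv hv') hβ2),
      u * v' + v * u', add_mem (mul_mem hu hv') (mul_mem hv hu'), by ring⟩

theorem eq_and_eq_of_add_mul_eq_add_mul (hβ : β ∉ E) {u v u' v' : Ω} (hu : u ∈ E) (hv : v ∈ E)
    (hu' : u' ∈ E) (hv' : v' ∈ E) (h : u + v * β = u' + v' * β) : u = u' ∧ v = v' := by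
  obtain rfl | hvv := eq_or_ne v v'
  · exact ⟨add_right_cancel h, rfl⟩
  refine absurd ?_ hβ
  have hβ_eq : β = (u - u') / (v' - v) := by
    rw [eq_div_iff (sub_ne_zero.2 hvv.symm)]
    linear_combination -h
  rw [hβ_eq]
  exact div_mem (sub_mem hu hu') (sub_mem hv' hv)

theorem finrank_sup_adjoin_of_sq_mem (hβ2 : β ^ 2 ∈ E) (hβ : β ∉ E) :
    finrank F ↥(E ⊔ F⟮β⟯) = 2 * finrank F E := by
  have hirr : Irreducible (X ^ 2 - C (⟨β ^ 2, hβ2⟩ : E)) := by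
    refine X_pow_sub_C_irreducible_of_prime Nat.prime_two fun b hb => hβ ?_
    have hb' : ((b : Ω) - β) * (b + β) = 0 := by
      have := congrArg ((↑) : E → Ω) hb
      push_cast at this
      linear_combination this
    rcases mul_eq_zero.1 hb' with h | h
    · rw [← sub_eq_zero.1 h]; exact b.2
    · rw [eq_neg_of_add_eq_zero_right h]; exact neg_mem b.2
  have hmin : minpoly E β = X ^ 2 - C ⟨β ^ 2, hβ2⟩ :=
    (minpoly.eq_of_irreducible_of_monic hirr (by simp) (monic_X_pow_sub_C _ two_ne_zero)).symm
  rw [← restrictScalars_adjoin_eq_sup]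
  change finrank F E⟮β⟯ = _
  rw [← Module.finrank_mul_finrank F E E⟮β⟯, adjoin.finrank (isIntegral_of_sq_mem hβ2), hmin,
    natDegree_X_pow_sub_C, mul_comm]

theorem exists_coords_of_sq_eq_add_mul (hβ2 : β ^ 2 ∈ E) (hβ : β ∉ E) {y s t : Ω}
    (hy : y ∈ E ⊔ F⟮β⟯) (hs : s ∈ E) (ht : t ∈ E) (h : y ^ 2 = s + t * β) :
    ∃ u ∈ E, ∃ v ∈ E, u ^ 2 + v ^ 2 * β ^ 2 = s ∧ 2 * u * v = t := by
  obtain ⟨u, hu, v, hv, rfl⟩ := exists_eq_add_mul_of_mem_sup_adjoin hβ2 hy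
  exact ⟨u, hu, v, hv, eq_and_eq_of_add_mul_eq_add_mul hβ
    (add_mem (pow_mem hu 2) (mul_mem (pow_mem hv 2) hβ2))
    (mul_mem (mul_mem (ofNat_mem E 2) hu) hv) hs ht (by rw [← h]; ring)⟩

theorem sq_mem_or_mul_sq_mem_of_sq_mem_sup_adjoin (h2 : (2 : Ω) ≠ 0) (hβ2 : β ^ 2 ∈ E)
    (hβ : β ∉ E) {x y : Ω} (hx : x ∈ E) (hy : y ∈ E ⊔ F⟮β⟯) (hyx : y ^ 2 = x) :
    (∃ u ∈ E, u ^ 2 = x) ∨ ∃ u ∈ E, u ^ 2 = x * β ^ 2 := by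
  obtain ⟨u, hu, v, hv, hs, ht⟩ :=
    exists_coords_of_sq_eq_add_mul hβ2 hβ hy hx (zero_mem E) (by rw [hyx]; ring)
  have huv : u * v = 0 := by simpa [mul_assoc, h2] using ht
  rcases mul_eq_zero.1 huv with rfl | rfl
  · exact .inr ⟨v * β ^ 2, mul_mem hv hβ2, by rw [← hs]; ring⟩
  · exact .inl ⟨u, hu, by rw [← hs]; ring⟩

theorem eq_zero_of_sq_eq_mul_of_mem_sup_adjoin (hβ2 : β ^ 2 ∈ E) (hβ : β ∉ E)
    (hneg : ∀ u ∈ E, u ^ 2 ≠ -β ^ 2) {x y : Ω} (hx : x ∈ E) (hy : y ∈ E ⊔ F⟮β⟯)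
    (hyx : y ^ 2 = x * β) : x = 0 := by
  obtain ⟨u, hu, v, hv, hs, rfl⟩ :=
    exists_coords_of_sq_eq_add_mul hβ2 hβ hy (zero_mem E) hx (by rw [hyx]; ring)
  obtain rfl | hv0 := eq_or_ne v 0
  · ring
  refine absurd ?_ (hneg (u / v) (div_mem hu hv))
  field_simp
  linear_combination hs

end QuadraticExtension

section PowerOfTwoRadicals

variable {F Ω : Type*} [Field F] [Field Ω] [Algebra F Ω]

theorem finrank_sup_adjoin_and_sq_of_pow_two_pow_eq (h2 : (2 : Ω) ≠ 0) {n : ℕ}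
    {E : IntermediateField F Ω} {a α : Ω} (ha : a ∈ E) (hα : α ^ 2 ^ n = a)
    (hsq : ∀ u ∈ E, u ^ 2 ≠ a) (hnsq : ∀ u ∈ E, u ^ 2 ≠ -a) :
    finrank F ↥(E ⊔ F⟮α⟯) = 2 ^ n * finrank F E ∧
      ∀ x ∈ E, (∃ y ∈ E ⊔ F⟮α⟯, y ^ 2 = x) → (∃ u ∈ E, u ^ 2 = x) ∨ ∃ u ∈ E, u ^ 2 = x * a := by
  induction n generalizing E a α with
  | zero =>
    rw [pow_zero, pow_one] at hα
    subst hα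
    rw [sup_eq_left.2 (adjoin_simple_le_iff.2 ha)]
    exact ⟨by ring, fun x _ hx => .inl hx⟩
  | succ n ih =>
    set δ := α ^ 2 ^ n
    have hδa : δ ^ 2 = a := by rw [← pow_mul, ← pow_succ, hα]
    have hδ2 : δ ^ 2 ∈ E := hδa ▸ ha
    have hδ : δ ∉ E := fun h => hsq δ h hδa
    have hnsq' : ∀ u ∈ E, u ^ 2 ≠ -δ ^ 2 := hδa ▸ hnsq
    set E₁ := E ⊔ F⟮δ⟯
    have hsup : E ⊔ F⟮α⟯ = E₁ ⊔ F⟮α⟯ := by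
      rw [sup_assoc, sup_eq_right.2 <|
        adjoin_simple_le_iff.2 (pow_mem (mem_adjoin_simple_self F α) _)]
    have hδ_not_sq : ∀ ε ∈ E, ε ≠ 0 → ∀ u ∈ E₁, u ^ 2 ≠ ε * δ := fun ε hε hε0 u hu h =>
      hε0 (eq_zero_of_sq_eq_mul_of_mem_sup_adjoin hδ2 hδ hnsq' hε hu h)
    obtain ⟨hrank, hsq₁⟩ := ih (E := E₁)
      ((le_sup_right : F⟮δ⟯ ≤ E₁) (mem_adjoin_simple_self F δ)) rfl
      (by simpa using hδ_not_sq 1 (one_mem E) one_ne_zero)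
      (by simpa using hδ_not_sq (-1) (neg_mem (one_mem E)) (neg_ne_zero.2 one_ne_zero))
    rw [hsup]
    refine ⟨by rw [hrank, finrank_sup_adjoin_of_sq_mem hδ2 hδ]; ring, fun x hx hxsq => ?_⟩
    rcases hsq₁ x ((le_sup_left : E ≤ E₁) hx) hxsq with ⟨y, hy, hyx⟩ | ⟨y, hy, hyx⟩
    · simpa only [hδa] using sq_mem_or_mul_sq_mem_of_sq_mem_sup_adjoin h2 hδ2 hδ hx hy hyx
    · rw [eq_zero_of_sq_eq_mul_of_mem_sup_adjoin hδ2 hδ hnsq' hx hy hyx]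
      exact .inl ⟨0, zero_mem E, by ring⟩

theorem finrank_adjoin_image_and_sq_of_pow_two_pow_eq {ι : Type*} (h2 : (2 : Ω) ≠ 0)
    (a : ι → F) (n : ι → ℕ) (α : ι → Ω) (hα : ∀ i, α i ^ 2 ^ n i = algebraMap F Ω (a i))
    (ha : ∀ T : Finset ι, T.Nonempty → ∀ u : F, u ^ 2 ≠ ∏ i ∈ T, a i ∧ u ^ 2 ≠ -∏ i ∈ T, a i)
    (J : Finset ι) :
    finrank F ↥(adjoin F (α '' J)) = ∏ j ∈ J, 2 ^ n j ∧
      ∀ c : F, (∃ y ∈ adjoin F (α '' J), y ^ 2 = algebraMap F Ω c) →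
        ∃ S ⊆ J, ∃ u : F, u ^ 2 = c * ∏ i ∈ S, a i := by
  classical
  induction J using Finset.induction_on with
  | empty =>
    refine ⟨by simp, fun c ⟨y, hy, hyc⟩ => ?_⟩
    rw [Finset.coe_empty, Set.image_empty, adjoin_empty, mem_bot] at hy
    obtain ⟨u, rfl⟩ := hy
    exact ⟨∅, subset_rfl, u, (algebraMap F Ω).injective (by simpa using hyc)⟩
  | @insert j J hj ih =>
    obtain ⟨hrank, hsq⟩ := ih
    set E := adjoin F (α '' J)
    have hsq_mul : ∀ s : F, (∃ y ∈ E, y ^ 2 = algebraMap F Ω (s * a j)) →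
        ∃ S ⊆ insert j J, j ∈ S ∧ ∃ u : F, u ^ 2 = s * ∏ i ∈ S, a i := fun s hs => by
      obtain ⟨S, hSJ, u, hu⟩ := hsq _ hs
      refine ⟨insert j S, Finset.insert_subset_insert j hSJ, S.mem_insert_self j, u, ?_⟩
      rw [hu, Finset.prod_insert fun h => hj (hSJ h)]
      ring
    have hnsq : ∀ y ∈ E, y ^ 2 ≠ algebraMap F Ω (a j) := fun y hy h => by
      obtain ⟨S, -, hjS, u, hu⟩ := hsq_mul 1 ⟨y, hy, by rw [h, one_mul]⟩
      exact (ha S ⟨j, hjS⟩ u).1 (by rw [hu, one_mul])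
    have hnsq' : ∀ y ∈ E, y ^ 2 ≠ -algebraMap F Ω (a j) := fun y hy h => by
      obtain ⟨S, -, hjS, u, hu⟩ := hsq_mul (-1) ⟨y, hy, by rw [h, neg_one_mul, map_neg]⟩
      exact (ha S ⟨j, hjS⟩ u).2 (by rw [hu, neg_one_mul])
    obtain ⟨hrank', hsq'⟩ := finrank_sup_adjoin_and_sq_of_pow_two_pow_eq h2
      (E.algebraMap_mem (a j)) (hα j) hnsq hnsq'
    have hadj : adjoin F (α '' ↑(insert j J)) = E ⊔ F⟮α j⟯ := by
      rw [Finset.coe_insert, Set.image_insert_eq, Set.insert_eq, adjoin_union, sup_comm]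
    rw [hadj]
    refine ⟨by rw [hrank', hrank, Finset.prod_insert hj], fun c hc => ?_⟩
    rcases hsq' _ (E.algebraMap_mem c) hc with hc' | ⟨y, hy, hyc⟩
    · obtain ⟨S, hSJ, u, hu⟩ := hsq c hc'
      exact ⟨S, hSJ.trans (Finset.subset_insert j J), u, hu⟩
    · obtain ⟨S, hSJ, -, u, hu⟩ := hsq_mul c ⟨y, hy, by rw [hyc, map_mul]⟩
      exact ⟨S, hSJ, u, hu⟩

end PowerOfTwoRadicals

theorem exists_eq_sq_of_sq_eq_algebraMap {D F : Type*} [CommRing D] [IsIntegrallyClosed D]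
    [Field F] [Algebra D F] [IsFractionRing D F] {c : D} {u : F}
    (h : u ^ 2 = algebraMap D F c) : ∃ d : D, c = d ^ 2 := by
  obtain ⟨d, hd⟩ := IsIntegrallyClosed.exists_algebraMap_eq_of_isIntegral_pow two_pos
    (h ▸ isIntegral_algebraMap)
  exact ⟨d, IsFractionRing.injective D F (by rw [map_pow, hd, h])⟩

theorem prod_mem_Sset {D : Type*} [CommMonoid D] {ℓ : ℕ} (N : Fin ℓ → D)
    {T : Finset (Fin ℓ)} (hT : T.Nonempty) : ∏ i ∈ T, N i ∈ Sset N 2 := by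
  classical
  refine ⟨T.max' hT, fun j => if j ∈ T then 1 else 0, fun j => ?_, ?_, fun j hj => ?_, ?_⟩
  · dsimp only
    split_ifs <;> norm_num
  · simp [T.max'_mem hT]
  · exact if_neg fun h => not_le.2 hj (T.le_max' j h)
  · simp [pow_ite, Finset.prod_ite_mem]

theorem lemma8c_general
    {D F : Type*} [CommRing D] [IsDomain D] [UniqueFactorizationMonoid D]
    [Field F] [Algebra D F] [IsFractionRing D F] (hchar : ringChar F ≠ 2)
    {ℓ : ℕ} (N : Fin ℓ → D)
    (n : Fin ℓ → ℕ) (m : Fin ℓ → ℕ) (hm : ∀ i, m i = 2 ^ n i)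
    (hD : ¬ ∃ x ∈ Sset N 2, ∃ d : D, x = d ^ 2)
    (f : Fin ℓ → ℕ)
    (hneg : ¬ ∃ x ∈ Sset N 2, ∃ d : D, x = -d ^ 2)
    (α : Fin ℓ → AlgebraicClosure F)
    (hα : ∀ i, α i ^ m i = algebraMap F (AlgebraicClosure F) (algebraMap D F (N i))) :
    (∀ i, f i = 1 →
      ¬ ∃ y ∈ IntermediateField.adjoin F (α '' {j | j ≠ i}),
        y ^ 2 = -algebraMap F (AlgebraicClosure F) (algebraMap D F (N i))) ∧
    Module.finrank F (IntermediateField.adjoin F (Set.range α)) = ∏ i, m i := by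
  have h2 : (2 : AlgebraicClosure F) ≠ 0 := by
    rw [← map_ofNat (algebraMap F (AlgebraicClosure F)) 2]
    exact (_root_.map_ne_zero _).2 (Ring.two_ne_zero hchar)
  have hsq : ∀ T : Finset (Fin ℓ), T.Nonempty → ∀ u : F,
      u ^ 2 ≠ ∏ i ∈ T, algebraMap D F (N i) ∧ u ^ 2 ≠ -∏ i ∈ T, algebraMap D F (N i) := by
    intro T hT u
    rw [← map_prod]
    refine ⟨fun h => hD ?_, fun h => hneg ?_⟩
    · obtain ⟨d, hd⟩ := exists_eq_sq_of_sq_eq_algebraMap h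
      exact ⟨_, prod_mem_Sset N hT, d, hd⟩
    · obtain ⟨d, hd⟩ :=
        exists_eq_sq_of_sq_eq_algebraMap (c := -∏ i ∈ T, N i) (by rw [h, map_neg])
      exact ⟨_, prod_mem_Sset N hT, d, by rw [← hd, neg_neg]⟩
  have hadjoin := finrank_adjoin_image_and_sq_of_pow_two_pow_eq h2 _ n α
    (fun i => hm i ▸ hα i) hsq
  constructor
  · rintro i - ⟨y, hy, hyi⟩
    obtain ⟨S, hS, u, hu⟩ := (hadjoin (Finset.univ.erase i)).2 (-algebraMap D F (N i))
        ⟨y, by rwa [Finset.coe_erase, Finset.coe_univ, ← Set.compl_eq_univ_sdiff],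
        by rw [hyi, map_neg]⟩
    have hiS : i ∉ S := fun h => by simpa using hS h
    exact (hsq (insert i S) (S.insert_nonempty i) u).2 (by rw [hu, Finset.prod_insert hiS]; ring)
  · rw [← Set.image_univ, ← Finset.coe_univ, (hadjoin Finset.univ).1]
    simp only [hm]

theorem lemma8c
    {D F : Type*} [CommRing D] [IsDomain D] [UniqueFactorizationMonoid D]
    [Field F] [Algebra D F] [IsFractionRing D F] (hchar : ringChar F ≠ 2)
    {ℓ : ℕ} (hℓ : 1 ≤ ℓ) (N : Fin ℓ → D) (hN : ∀ i, N i ≠ 0)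
    (n : Fin ℓ → ℕ) (hn : ∀ i, 1 ≤ n i) (m : Fin ℓ → ℕ) (hm : ∀ i, m i = 2 ^ n i)
    (ζ : AlgebraicClosure F) (hζ : IsPrimitiveRoot ζ (Finset.univ.lcm m))
    (hD : ¬ ∃ x ∈ Sset N 2, ∃ d : D, x = d ^ 2)
    (M : D) (hMS : M ∈ Sset N 2)
    (hMK : ∃ κ ∈ IntermediateField.adjoin F ({ζ} : Set (AlgebraicClosure F)),
      κ ^ 2 = algebraMap F (AlgebraicClosure F) (algebraMap D F M))
    (huniq : ∀ x ∈ Sset N 2,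
      (∃ κ ∈ IntermediateField.adjoin F ({ζ} : Set (AlgebraicClosure F)),
        κ ^ 2 = algebraMap F (AlgebraicClosure F) (algebraMap D F x)) → x = M)
    (f : Fin ℓ → ℕ) (hf : ∀ i, f i ≤ 1) (hMf : M = ∏ i, N i ^ f i)
    (hsharp : ∃ i, f i = 1)
    (h4 : 4 ∣ Finset.univ.lcm m)
    (hneg : ¬ ∃ x ∈ Sset N 2, ∃ d : D, x = -d ^ 2)
    (α : Fin ℓ → AlgebraicClosure F)
    (hα : ∀ i, α i ^ m i = algebraMap F (AlgebraicClosure F) (algebraMap D F (N i))) :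
    (∀ i, f i = 1 →
      ¬ ∃ y ∈ IntermediateField.adjoin F (α '' {j | j ≠ i}),
        y ^ 2 = -algebraMap F (AlgebraicClosure F) (algebraMap D F (N i))) ∧
    Module.finrank F (IntermediateField.adjoin F (Set.range α)) = ∏ i, m i :=
  lemma8c_general hchar N n m hm hD f hneg α hα
end
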